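/- arXiv:1111.6834 — 5 statements merged into one kernel-verified Lean document; each statement's English description precedes it below -/
import Mathlib

section
/- Let (E_m)_{m≥0} be the events that the unit cube is m-good in Mandelbrot fractal percolation with parameters p_0 and N, where k ≤ (p_0 - 2δ)N^d for some δ > 0. The recursion P(E_0) = P(Bin(N^d, p_0) ≥ k) and P(E_{m+1}) = P(Bin(N^d, p_0·P(E_m)) ≥ k) holds, and if p_0/(4δ²N^d) < δ and N is large enough, then by induction P(E_m) ≥ 1 - 1/(4δ²N^d) for all m ≥ 0. In particular, the statement that for a sequence q_m defined by q_0 = P(Bin(N^d,p_0) ≥ k) and q_{m+1} = P(Bin(N^d, p_0 q_m) ≥ k), the inequality q_m ≥ 1 - 1/(4δ²N^d) holds for all m, under the stated hypotheses. -/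
/-- `P(Bin(n,q) ≥ k)` for a binomial random variable with parameters `n` and `q`. -/
noncomputable def binomGe (n k : ℕ) (q : ℝ) : ℝ :=
  ∑ i ∈ Finset.Icc k n, (n.choose i : ℝ) * q ^ i * (1 - q) ^ (n - i)

/-!
The goodness probabilities are binomial upper tails `P(Bin(n, r) ≥ k)`, and Chebyshev's
inequality with `Var Bin(n, r) ≤ n/4` bounds such a tail below by `1 - 1/(4δ²n)` as soon as
`k ≤ (r - δ) n`. The interval `[1 - 1/(4δ²n), 1]` is therefore mapped into itself by
`s ↦ P(Bin(n, p₀ s) ≥ k)`: the hypothesis on `p₀` says exactly that `p₀ s ≥ (p₀ - 2δ) + δ`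
on it.
Starting from `s = 1`, all `q_m` stay in this interval.
-/

open Finset Polynomial

namespace binomGe

lemma eval_bernsteinPolynomial (n i : ℕ) (r : ℝ) :
    (bernsteinPolynomial ℝ n i).eval r = n.choose i * r ^ i * (1 - r) ^ (n - i) := by
  simp [bernsteinPolynomial]

lemma eq_sum_eval_bernsteinPolynomial (n k : ℕ) (r : ℝ) :
    binomGe n k r = ∑ i ∈ Icc k n, (bernsteinPolynomial ℝ n i).eval r := by
  simp only [binomGe, eval_bernsteinPolynomial]

lemma sum_eval_bernsteinPolynomial (n : ℕ) (r : ℝ) :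
    ∑ i ∈ range (n + 1), (bernsteinPolynomial ℝ n i).eval r = 1 := by
  simpa [eval_finsetSum] using congrArg (eval r) (bernsteinPolynomial.sum ℝ n)

lemma sum_sq_mul_eval_bernsteinPolynomial (n : ℕ) (r : ℝ) :
    ∑ i ∈ range (n + 1), (n * r - i) ^ 2 * (bernsteinPolynomial ℝ n i).eval r
      = n * r * (1 - r) := by
  simpa [eval_finsetSum] using congrArg (eval r) (bernsteinPolynomial.variance ℝ n)

lemma eval_bernsteinPolynomial_nonneg (n i : ℕ) {r : ℝ} (hr0 : 0 ≤ r) (hr1 : r ≤ 1) :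
    0 ≤ (bernsteinPolynomial ℝ n i).eval r := by
  rw [eval_bernsteinPolynomial]
  have : 0 ≤ 1 - r := by linarith
  positivity

lemma sum_range_add_binomGe {n k : ℕ} (hk : k ≤ n + 1) (r : ℝ) :
    ∑ i ∈ range k, (bernsteinPolynomial ℝ n i).eval r + binomGe n k r = 1 := by
  rw [eq_sum_eval_bernsteinPolynomial, ← Ico_add_one_right_eq_Icc, sum_range_add_sum_Ico _ hk,
    sum_eval_bernsteinPolynomial]

lemma le_one {n k : ℕ} {r : ℝ} (hr0 : 0 ≤ r) (hr1 : r ≤ 1) : binomGe n k r ≤ 1 := by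
  rw [eq_sum_eval_bernsteinPolynomial, ← sum_eval_bernsteinPolynomial n r]
  refine sum_le_sum_of_subset_of_nonneg (fun i hi => ?_)
    fun i _ _ => eval_bernsteinPolynomial_nonneg n i hr0 hr1
  simp only [mem_Icc, mem_range] at hi ⊢
  omega

/-- Chebyshev's inequality for the lower tail of `Bin(n, r)`. -/
lemma one_sub_variance_div_le {n k : ℕ} {r a : ℝ} (hr0 : 0 ≤ r) (hr1 : r ≤ 1) (ha : 0 < a)
    (hk : k + a ≤ n * r) : 1 - n * r * (1 - r) / a ^ 2 ≤ binomGe n k r := by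
  set w : ℕ → ℝ := fun i => (bernsteinPolynomial ℝ n i).eval r
  have hw : ∀ i, 0 ≤ w i := fun i => eval_bernsteinPolynomial_nonneg n i hr0 hr1
  have hkn : k ≤ n + 1 := by
    have : (k : ℝ) ≤ n := by nlinarith [(n.cast_nonneg : (0 : ℝ) ≤ n)]
    have := Nat.cast_le.mp this
    omega
  have hlower : a ^ 2 * ∑ i ∈ range k, w i ≤ n * r * (1 - r) := by
    rw [← sum_sq_mul_eval_bernsteinPolynomial, mul_sum]
    calc ∑ i ∈ range k, a ^ 2 * w i
        ≤ ∑ i ∈ range k, (n * r - i) ^ 2 * w i := by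
          refine sum_le_sum fun i hi => mul_le_mul_of_nonneg_right ?_ (hw i)
          have : (i : ℝ) + 1 ≤ k := by exact_mod_cast mem_range.mp hi
          exact pow_le_pow_left₀ ha.le (by linarith) 2
      _ ≤ ∑ i ∈ range (n + 1), (n * r - i) ^ 2 * w i :=
          sum_le_sum_of_subset_of_nonneg (range_subset_range.mpr hkn)
            fun i _ _ => mul_nonneg (sq_nonneg _) (hw i)
  have htail : ∑ i ∈ range k, w i ≤ n * r * (1 - r) / a ^ 2 := by
    rw [le_div_iff₀ (by positivity)]
    linarith
  linarith [sum_range_add_binomGe hkn r]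

lemma one_sub_inv_le {n k : ℕ} (hn : 0 < n) {r δ : ℝ} (hδ : 0 < δ) (hr0 : 0 ≤ r)
    (hr1 : r ≤ 1) (hk : (k : ℝ) ≤ (r - δ) * n) : 1 - 1 / (4 * δ ^ 2 * n) ≤ binomGe n k r := by
  have hn' : (0 : ℝ) < n := by exact_mod_cast hn
  refine le_trans ?_ (one_sub_variance_div_le hr0 hr1 (mul_pos hδ hn') (by linarith))
  rw [sub_le_sub_iff_left, div_le_div_iff₀ (by positivity) (by positivity)]
  nlinarith [sq_nonneg (2 * r - 1), sq_nonneg δ]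

lemma mapsTo_Icc {n k : ℕ} (hn : 0 < n) {p₀ δ : ℝ} (hp₀1 : p₀ ≤ 1) (hδ : 0 < δ)
    (hk : (k : ℝ) ≤ (p₀ - 2 * δ) * n)
    (h1 : p₀ * (1 - 1 / (4 * δ ^ 2 * n)) > (p₀ - 2 * δ) + δ) :
    Set.MapsTo (fun s => binomGe n k (p₀ * s))
      (Set.Icc (1 - 1 / (4 * δ ^ 2 * n)) 1) (Set.Icc (1 - 1 / (4 * δ ^ 2 * n)) 1) := by
  intro s ⟨hs0, hs1⟩
  have hp : 0 ≤ p₀ - 2 * δ :=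
    nonneg_of_mul_nonneg_left (k.cast_nonneg.trans hk) (by exact_mod_cast hn)
  have hr : p₀ - δ ≤ p₀ * s := by nlinarith
  have hr0 : 0 ≤ p₀ * s := by linarith
  have hr1 : p₀ * s ≤ 1 := by nlinarith
  have hkr : (k : ℝ) ≤ (p₀ * s - δ) * n :=
    hk.trans (mul_le_mul_of_nonneg_right (by linarith) n.cast_nonneg)
  exact ⟨one_sub_inv_le hn hδ hr0 hr1 hkr, le_one hr0 hr1⟩

end binomGe

theorem stmt9_general (N d : ℕ) (hN : 2 ≤ N)
    (p₀ δ : ℝ) (hp₀1 : p₀ < 1) (hδ : 0 < δ)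
    (k : ℕ) (hk : (k : ℝ) ≤ (p₀ - 2 * δ) * (N : ℝ) ^ d)
    (h1 : p₀ * (1 - 1 / (4 * δ ^ 2 * (N : ℝ) ^ d)) > (p₀ - 2 * δ) + δ)
    (q : ℕ → ℝ)
    (hq0 : q 0 = binomGe (N ^ d) k p₀)
    (hqs : ∀ m, q (m + 1) = binomGe (N ^ d) k (p₀ * q m)) :
    ∀ m, 1 - 1 / (4 * δ ^ 2 * (N : ℝ) ^ d) ≤ q m := by
  rw [← Nat.cast_pow] at hk h1 ⊢
  have hmaps := binomGe.mapsTo_Icc (pow_pos (by omega) d) hp₀1.le hδ hk h1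
  have hq : ∀ m, q m ∈ Set.Icc (1 - 1 / (4 * δ ^ 2 * ((N ^ d : ℕ) : ℝ))) 1 := by
    intro m
    induction m with
    | zero => simpa [hq0] using hmaps ⟨sub_le_self _ (by positivity), le_rfl⟩
    | succ m ih => simpa [hqs] using hmaps ih
  exact fun m => (hq m).1

/-- The recursion `q_0 = P(Bin(N^d,p₀) ≥ k)`, `q_{m+1} = P(Bin(N^d, p₀ q_m) ≥ k)` for the
probabilities that the unit cube is `m`-good satisfies `q_m ≥ 1 - 1/(4δ²N^d)` for all `m`,
provided `k ≤ (p₀ - 2δ)N^d`, `p₀(1 - 1/(4δ²N^d)) > (p₀ - 2δ) + δ` and `p₀/(4δ²N^d) < δ`. -/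
theorem stmt9 (N d : ℕ) (hN : 2 ≤ N) (hd : 2 ≤ d)
    (p₀ δ : ℝ) (hp₀ : 0 < p₀) (hp₀1 : p₀ < 1) (hδ : 0 < δ)
    (k : ℕ) (hk : (k : ℝ) ≤ (p₀ - 2 * δ) * (N : ℝ) ^ d)
    (h1 : p₀ * (1 - 1 / (4 * δ ^ 2 * (N : ℝ) ^ d)) > (p₀ - 2 * δ) + δ)
    (h2 : p₀ / (4 * δ ^ 2 * (N : ℝ) ^ d) < δ)
    (q : ℕ → ℝ)
    (hq0 : q 0 = binomGe (N ^ d) k p₀)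
    (hqs : ∀ m, q (m + 1) = binomGe (N ^ d) k (p₀ * q m)) :
    ∀ m, 1 - 1 / (4 * δ ^ 2 * (N : ℝ) ^ d) ≤ q m :=
  stmt9_general N d hN p₀ δ hp₀1 hδ k hk h1 q hq0 hqs
end

section
/- Let G_2 be obtained by selecting k vertices uniformly at random from a set B of size n and independently retaining each selected vertex with probability 1-ε, and let R ~ Binomial(n, π) be independent. Define G_3 as follows: if |G_2| ≥ M and R ≤ M, select R vertices uniformly from G_2; otherwise select R vertices of B uniformly and independently of G_2. Then G_3 is distributed as a Bernoulli(π) product random subset of B, and P(G_3 ⊆ G_2) ≥ P(|G_2| ≥ M, R ≤ M). -/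
/-!
Write `g |B| = P(G₂ = B)`, `q r = P(R = r)`, and `κ(B, A)` for the conditional probability
that `G₃ = A` given `G₂ = B` and `R = |A|`; then the atom `{G₃ = A, G₂ = B}` has mass
`g |B| * q |A| * κ(B, A)`. Two marginal identities of `κ` carry the argument: for fixed `B`,
`κ(B, ·)` is a probability on the `r`-subsets, and summing `κ(·, A)` over the `b`-subsets gives
`C(n, b) / C(n, |A|)` (a uniform `a`-subset of a uniform `b`-subset is a uniform `a`-subset).
The first shows that the atoms have total mass one, which makes `P` additive on unions of atoms
although nothing is assumed measurable; the second then gives `P(G₃ = A) = q |A| / C(n, |A|)`.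
On the good event, `G₃ ⊆ G₂` can only fail on null atoms.
-/

open MeasureTheory Finset
open scoped ENNReal

theorem measure_preimage_eq_sum_of_sum_le {Ω ι : Type*} [MeasurableSpace Ω] [Fintype ι]
    [DecidableEq ι] {μ : Measure Ω} [IsFiniteMeasure μ] (f : Ω → ι)
    (hmass : ∑ i, μ {ω | f ω = i} ≤ μ Set.univ) (s : Finset ι) :
    μ {ω | f ω ∈ s} = ∑ i ∈ s, μ {ω | f ω = i} := by
  have hle : ∀ t : Finset ι, μ {ω | f ω ∈ t} ≤ ∑ i ∈ t, μ {ω | f ω = i} := fun t =>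
    calc μ {ω | f ω ∈ t} ≤ μ (⋃ i ∈ t, {ω | f ω = i}) :=
          measure_mono fun ω hω => Set.mem_biUnion (x := f ω) hω rfl
      _ ≤ _ := measure_biUnion_finset_le t _
  have hfin : ∑ i ∈ sᶜ, μ {ω | f ω = i} ≠ ∞ :=
    ENNReal.sum_ne_top.2 fun i _ => measure_ne_top μ _
  refine (hle s).antisymm (ENNReal.le_of_add_le_add_right hfin ?_)
  calc ∑ i ∈ s, μ {ω | f ω = i} + ∑ i ∈ sᶜ, μ {ω | f ω = i}
      = ∑ i, μ {ω | f ω = i} := sum_add_sum_compl s _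
    _ ≤ μ ({ω | f ω ∈ s} ∪ {ω | f ω ∈ sᶜ}) := by
        refine hmass.trans (measure_mono fun ω _ => ?_)
        by_cases h : f ω ∈ s <;> simp [h]
    _ ≤ μ {ω | f ω ∈ s} + ∑ i ∈ sᶜ, μ {ω | f ω = i} :=
        (measure_union_le _ _).trans (add_le_add_right (hle sᶜ) _)

theorem measure_le_measure_subset_of_null {Ω α : Type*} [MeasurableSpace Ω] [Countable α]
    {P : Measure Ω} {G₂ G₃ : Ω → Finset α} {R : Ω → ℕ} (good : Finset α → ℕ → Prop)
    (hnull : ∀ B r A, good B r → ¬A ⊆ B →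
      P ({ω | G₃ ω = A} ∩ {ω | G₂ ω = B} ∩ {ω | R ω = r}) = 0) :
    P {ω | good (G₂ ω) (R ω)} ≤ P {ω | G₃ ω ⊆ G₂ ω} := by
  refine measure_mono_ae (ae_iff.2 (measure_mono_null (fun ω hω => ?_) (measure_iUnion_null
    fun i : Finset α × Finset α × ℕ =>
      measure_iUnion_null fun (h : good i.2.1 i.2.2 ∧ ¬i.1 ⊆ i.2.1) =>
        hnull i.2.1 i.2.2 i.1 h.1 h.2)))
  exact Set.mem_iUnion.2
    ⟨(G₃ ω, G₂ ω, R ω), Set.mem_iUnion.2 ⟨Classical.not_imp.1 hω, ⟨rfl, rfl⟩, rfl⟩⟩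

noncomputable section

def binomialWeight (n : ℕ) (x : ℝ) (r : ℕ) : ℝ :=
  n.choose r * x ^ r * (1 - x) ^ (n - r)

def thinnedUniformWeight (n k : ℕ) (ε : ℝ) (b : ℕ) : ℝ :=
  if b ≤ k then ((n - b).choose (k - b) : ℝ) / n.choose k * (1 - ε) ^ b * ε ^ (k - b) else 0

theorem binomialWeight_nonneg {x : ℝ} (hx₀ : 0 ≤ x) (hx₁ : x ≤ 1) (n r : ℕ) :
    0 ≤ binomialWeight n x r := by
  unfold binomialWeight
  have : 0 ≤ 1 - x := by linarith
  positivity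

theorem binomialWeight_div_choose {n r : ℕ} (h : r ≤ n) (x : ℝ) :
    binomialWeight n x r / n.choose r = x ^ r * (1 - x) ^ (n - r) := by
  have : (n.choose r : ℝ) ≠ 0 := by exact_mod_cast (Nat.choose_pos h).ne'
  rw [binomialWeight, mul_assoc, mul_div_cancel_left₀ _ this]

theorem sum_binomialWeight {n m : ℕ} (h : n ≤ m) (x : ℝ) :
    ∑ r ∈ range (m + 1), binomialWeight n x r = 1 := by
  rw [← sum_subset (range_subset_range.2 (Nat.succ_le_succ h))]
  · rw [← one_pow n, ← add_sub_cancel x 1, add_pow]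
    exact sum_congr rfl fun r _ => by rw [binomialWeight]; ring
  · intro r _ hr
    simp [binomialWeight, Nat.choose_eq_zero_of_lt (by simpa using hr : n < r)]

theorem thinnedUniformWeight_nonneg {ε : ℝ} (hε₀ : 0 ≤ ε) (hε₁ : ε ≤ 1) (n k b : ℕ) :
    0 ≤ thinnedUniformWeight n k ε b := by
  unfold thinnedUniformWeight
  have : 0 ≤ 1 - ε := by linarith
  split_ifs <;> positivity

theorem choose_mul_thinnedUniformWeight {n k : ℕ} (hk : k ≤ n) (ε : ℝ) (b : ℕ) :
    n.choose b * thinnedUniformWeight n k ε b = binomialWeight k (1 - ε) b := by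
  unfold thinnedUniformWeight binomialWeight
  split_ifs with hb
  · have hnk : (n.choose k : ℝ) ≠ 0 := by exact_mod_cast (Nat.choose_pos hk).ne'
    have hchoose : (n.choose k * k.choose b : ℝ) = n.choose b * (n - b).choose (k - b) := by
      exact_mod_cast Nat.choose_mul hb
    rw [sub_sub_cancel]
    field_simp
    linear_combination (-((1 - ε) ^ b * ε ^ (k - b))) * hchoose
  · simp [Nat.choose_eq_zero_of_lt (not_le.1 hb)]

theorem sum_thinnedUniformWeight_card {α : Type*} [Fintype α] {k : ℕ} (hk : k ≤ Fintype.card α)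
    (ε : ℝ) : ∑ B : Finset α, thinnedUniformWeight (Fintype.card α) k ε #B = 1 := by
  rw [← powerset_univ, sum_powerset_apply_card, card_univ]
  simp_rw [nsmul_eq_mul, choose_mul_thinnedUniformWeight hk]
  exact sum_binomialWeight hk _

section Coupling

variable {α : Type*} [Fintype α]

theorem sum_powersetCard_univ {β : Type*} [AddCommMonoid β] (f : Finset α → β) :
    ∑ s, f s = ∑ r ∈ range (Fintype.card α + 1), ∑ s ∈ powersetCard r univ, f s := by
  rw [← powerset_univ, sum_powerset, card_univ]

variable [DecidableEq α]

def couplingKernel (M : ℝ) (B A : Finset α) : ℝ :=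
  if M ≤ #B ∧ (#A : ℝ) ≤ M then
    if A ⊆ B then ((#B).choose #A : ℝ)⁻¹ else 0
  else ((Fintype.card α).choose #A : ℝ)⁻¹

theorem couplingKernel_nonneg (M : ℝ) (B A : Finset α) : 0 ≤ couplingKernel M B A := by
  unfold couplingKernel
  split_ifs <;> positivity

theorem sum_couplingKernel_powersetCard_left (M : ℝ) (B : Finset α) {r : ℕ}
    (hr : r ≤ Fintype.card α) : ∑ A ∈ powersetCard r univ, couplingKernel M B A = 1 := by
  have hcard : ∀ A ∈ powersetCard r (univ : Finset α), #A = r := fun A hA =>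
    mem_powersetCard_univ.1 hA
  by_cases hgood : M ≤ #B ∧ (r : ℝ) ≤ M
  · have hrB : r ≤ #B := by exact_mod_cast hgood.2.trans hgood.1
    calc ∑ A ∈ powersetCard r univ, couplingKernel M B A
        = ∑ A ∈ powersetCard r univ, if A ⊆ B then ((#B).choose r : ℝ)⁻¹ else 0 :=
          sum_congr rfl fun A hA => by simp [couplingKernel, hcard A hA, hgood]
      _ = 1 := by
          have hsub : {A ∈ powersetCard r (univ : Finset α) | A ⊆ B} = powersetCard r B := by
            ext A
            simp [mem_powersetCard, and_comm]
          have hchoose : ((#B).choose r : ℝ) ≠ 0 := by exact_mod_cast (Nat.choose_pos hrB).ne'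
          rw [← sum_filter, sum_const, hsub, card_powersetCard, nsmul_eq_mul,
            mul_inv_cancel₀ hchoose]
  · have hchoose : ((Fintype.card α).choose r : ℝ) ≠ 0 := by
      exact_mod_cast (Nat.choose_pos hr).ne'
    calc ∑ A ∈ powersetCard r univ, couplingKernel M B A
        = ∑ A ∈ powersetCard r (univ : Finset α), ((Fintype.card α).choose r : ℝ)⁻¹ :=
          sum_congr rfl fun A hA => by simp [couplingKernel, hcard A hA, hgood]
      _ = 1 := by
          rw [sum_const, card_powersetCard, card_univ, nsmul_eq_mul, mul_inv_cancel₀ hchoose]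

theorem sum_couplingKernel_powersetCard_right (M : ℝ) (A : Finset α) (b : ℕ) :
    ∑ B ∈ powersetCard b univ, couplingKernel M B A =
      ((Fintype.card α).choose b : ℝ) / (Fintype.card α).choose #A := by
  have hcard : ∀ B ∈ powersetCard b (univ : Finset α), #B = b := fun B hB =>
    mem_powersetCard_univ.1 hB
  have hA : ((Fintype.card α).choose #A : ℝ) ≠ 0 := by
    exact_mod_cast (Nat.choose_pos (card_le_univ A)).ne'
  by_cases hgood : M ≤ b ∧ (#A : ℝ) ≤ M
  · have hAb : #A ≤ b := by exact_mod_cast hgood.2.trans hgood.1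
    have hchoose : ((Fintype.card α).choose b * b.choose #A : ℝ) =
        (Fintype.card α).choose #A * (Fintype.card α - #A).choose (b - #A) := by
      exact_mod_cast Nat.choose_mul hAb
    have hbA : (b.choose #A : ℝ) ≠ 0 := by exact_mod_cast (Nat.choose_pos hAb).ne'
    calc ∑ B ∈ powersetCard b univ, couplingKernel M B A
        = ∑ B ∈ powersetCard b univ, if A ⊆ B then (b.choose #A : ℝ)⁻¹ else 0 :=
          sum_congr rfl fun B hB => by simp [couplingKernel, hcard B hB, hgood]
      _ = ((Fintype.card α).choose b : ℝ) / (Fintype.card α).choose #A := by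
          rw [← sum_filter, sum_const,
            card_filter_powersetCard_subset A univ b (subset_univ A) hAb, card_univ, nsmul_eq_mul]
          field_simp
          linear_combination -hchoose
  · calc ∑ B ∈ powersetCard b univ, couplingKernel M B A
        = ∑ B ∈ powersetCard b (univ : Finset α), ((Fintype.card α).choose #A : ℝ)⁻¹ :=
          sum_congr rfl fun B hB => by simp [couplingKernel, hcard B hB, hgood]
      _ = ((Fintype.card α).choose b : ℝ) / (Fintype.card α).choose #A := by
          rw [sum_const, card_powersetCard, card_univ, nsmul_eq_mul, div_eq_mul_inv]

theorem sum_sum_couplingWeight {g q : ℕ → ℝ} (hg : ∑ B : Finset α, g #B = 1)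
    (hq : ∑ r ∈ range (Fintype.card α + 1), q r = 1) (M : ℝ) :
    ∑ A : Finset α, ∑ B : Finset α, g #B * q #A * couplingKernel M B A = 1 := by
  have hslice : ∀ B : Finset α, ∑ A : Finset α, q #A * couplingKernel M B A = 1 := fun B => by
    rw [sum_powersetCard_univ, ← hq]
    refine sum_congr rfl fun r hr => ?_
    rw [← mul_one (q r), ← sum_couplingKernel_powersetCard_left M B
      (Nat.lt_succ_iff.1 (mem_range.1 hr)), mul_sum]
    exact sum_congr rfl fun A hA => by rw [mem_powersetCard_univ.1 hA]
  rw [sum_comm, ← hg]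
  exact sum_congr rfl fun B _ => by simp_rw [mul_assoc, ← mul_sum, hslice, mul_one]

theorem sum_couplingWeight_left {g q : ℕ → ℝ} (hg : ∑ B : Finset α, g #B = 1) (M : ℝ)
    (A : Finset α) :
    ∑ B : Finset α, g #B * q #A * couplingKernel M B A =
      q #A / (Fintype.card α).choose #A := by
  have hg' : ∑ b ∈ range (Fintype.card α + 1), ((Fintype.card α).choose b : ℝ) * g b = 1 := by
    simpa [← powerset_univ, sum_powerset_apply_card] using hg
  rw [sum_powersetCard_univ, ← mul_one (q #A / _), ← hg', mul_sum]
  refine sum_congr rfl fun b _ => ?_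
  calc ∑ B ∈ powersetCard b univ, g #B * q #A * couplingKernel M B A
      = g b * q #A * ∑ B ∈ powersetCard b univ, couplingKernel M B A := by
        rw [mul_sum]
        exact sum_congr rfl fun B hB => by rw [mem_powersetCard_univ.1 hB]
    _ = q #A / (Fintype.card α).choose #A * ((Fintype.card α).choose b * g b) := by
        rw [sum_couplingKernel_powersetCard_right]
        ring

variable {Ω : Type*} [MeasurableSpace Ω] {P : Measure Ω} {G₂ G₃ : Ω → Finset α} {R : Ω → ℕ}
  {g q : ℕ → ℝ} {M : ℝ}

theorem measure_coupling_atom (hg : ∀ b, 0 ≤ g b)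
    (hG₂ : ∀ B, P {ω | G₂ ω = B} = ENNReal.ofReal (g #B))
    (hR : ∀ r, P {ω | R ω = r} = ENNReal.ofReal (q r))
    (hRG₂ : ∀ B r, P ({ω | G₂ ω = B} ∩ {ω | R ω = r}) = P {ω | G₂ ω = B} * P {ω | R ω = r})
    (hcard : ∀ ω, #(G₃ ω) = R ω)
    (hgood : ∀ (B : Finset α) (r : ℕ) (A : Finset α), M ≤ (#B : ℝ) → (r : ℝ) ≤ M →
      P ({ω | G₃ ω = A} ∩ {ω | G₂ ω = B} ∩ {ω | R ω = r}) =
        if A ⊆ B ∧ #A = r then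
          P ({ω | G₂ ω = B} ∩ {ω | R ω = r}) / ((#B).choose r : ℝ≥0∞) else 0)
    (hbad : ∀ (B : Finset α) (r : ℕ) (A : Finset α), ¬(M ≤ (#B : ℝ) ∧ (r : ℝ) ≤ M) →
      P ({ω | G₃ ω = A} ∩ {ω | G₂ ω = B} ∩ {ω | R ω = r}) =
        if #A = r then
          P ({ω | G₂ ω = B} ∩ {ω | R ω = r}) / ((Fintype.card α).choose r : ℝ≥0∞) else 0)
    (A B : Finset α) :
    P {ω | (G₃ ω, G₂ ω) = (A, B)} = ENNReal.ofReal (g #B * q #A * couplingKernel M B A) := by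
  have hatom : {ω | (G₃ ω, G₂ ω) = (A, B)} =
      {ω | G₃ ω = A} ∩ {ω | G₂ ω = B} ∩ {ω | R ω = #A} := by
    ext ω
    simp only [Set.mem_ofPred_eq, Set.mem_inter_iff, Prod.mk.injEq]
    constructor
    · rintro ⟨rfl, rfl⟩
      exact ⟨⟨rfl, rfl⟩, (hcard ω).symm⟩
    · rintro ⟨h, -⟩
      exact h
  have hjoint : P ({ω | G₂ ω = B} ∩ {ω | R ω = #A}) = ENNReal.ofReal (g #B * q #A) := by
    rw [hRG₂, hG₂, hR, ENNReal.ofReal_mul (hg _)]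
  rw [hatom, couplingKernel]
  split_ifs with hM hAB
  · have hpos : (0 : ℝ) < (#B).choose #A := by exact_mod_cast Nat.choose_pos (card_le_card hAB)
    rw [hgood B _ A hM.1 hM.2, if_pos ⟨hAB, rfl⟩, hjoint, ← div_eq_mul_inv,
      ENNReal.ofReal_div_of_pos hpos, ENNReal.ofReal_natCast]
  · rw [hgood B _ A hM.1 hM.2, if_neg fun h => hAB h.1, mul_zero, ENNReal.ofReal_zero]
  · have hpos : (0 : ℝ) < (Fintype.card α).choose #A := by
      exact_mod_cast Nat.choose_pos (card_le_univ A)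
    rw [hbad B _ A hM, if_pos rfl, hjoint, ← div_eq_mul_inv, ENNReal.ofReal_div_of_pos hpos,
      ENNReal.ofReal_natCast]

theorem measure_fst_eq_of_atoms [IsProbabilityMeasure P] (f : Ω → Finset α × Finset α)
    (hg₀ : ∀ b, 0 ≤ g b) (hq₀ : ∀ r, 0 ≤ q r) (hg : ∑ B : Finset α, g #B = 1)
    (hq : ∑ r ∈ range (Fintype.card α + 1), q r = 1)
    (hatom : ∀ A B, P {ω | f ω = (A, B)} = ENNReal.ofReal (g #B * q #A * couplingKernel M B A))
    (A : Finset α) :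
    P {ω | (f ω).1 = A} = ENNReal.ofReal (q #A / (Fintype.card α).choose #A) := by
  have hw : ∀ A B : Finset α, 0 ≤ g #B * q #A * couplingKernel M B A := fun A B =>
    mul_nonneg (mul_nonneg (hg₀ _) (hq₀ _)) (couplingKernel_nonneg M B A)
  have hmass : ∑ i, P {ω | f ω = i} ≤ P Set.univ := by
    refine le_of_eq ?_
    calc ∑ i, P {ω | f ω = i}
        = ∑ A : Finset α, ∑ B : Finset α,
            ENNReal.ofReal (g #B * q #A * couplingKernel M B A) := by
          rw [Fintype.sum_prod_type]
          simp_rw [hatom]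
      _ = ENNReal.ofReal (∑ A : Finset α, ∑ B : Finset α,
            g #B * q #A * couplingKernel M B A) := by
          rw [ENNReal.ofReal_sum_of_nonneg fun A _ => sum_nonneg fun B _ => hw A B]
          exact sum_congr rfl fun A _ => (ENNReal.ofReal_sum_of_nonneg fun B _ => hw A B).symm
      _ = P Set.univ := by rw [sum_sum_couplingWeight hg hq M, ENNReal.ofReal_one, measure_univ]
  have hfst : {ω | (f ω).1 = A} = {ω | f ω ∈ ({A} : Finset _) ×ˢ univ} := by
    ext ω
    simp only [Set.mem_ofPred_eq, mem_product, mem_singleton, mem_univ, and_true]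
  rw [hfst, measure_preimage_eq_sum_of_sum_le f hmass, sum_product, sum_singleton]
  simp_rw [hatom]
  rw [← ENNReal.ofReal_sum_of_nonneg fun B _ => hw A B, sum_couplingWeight_left hg]

end Coupling

end

/-- The coupling construction of Lemma 12: `G₂` is a uniform `k`-subset of a finite set `B`
(of size `n`) thinned by independent Bernoulli(`1-ε`) retention; `R ~ Bin(n,π)` is
independent of `G₂`; `G₃` is a uniform `R`-subset of `G₂` on the event
`{|G₂| ≥ M, R ≤ M}` and a uniform `R`-subset of `B` (independent of `G₂`) otherwise.
Then `G₃` is distributed as Bernoulli(`π`) site percolation on `B`, and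
`P(G₃ ⊆ G₂) ≥ P(|G₂| ≥ M, R ≤ M)`. -/
theorem stmt12 {Ω α : Type*} [MeasurableSpace Ω] [Fintype α] [DecidableEq α]
    (P : Measure Ω) [IsProbabilityMeasure P]
    (n k : ℕ) (hn : n = Fintype.card α) (hk : k ≤ n)
    (ε π M : ℝ) (hε : 0 < ε) (hε1 : ε < 1) (hπ : 0 < π) (hπ1 : π < 1)
    (G₂ G₃ : Ω → Finset α) (R : Ω → ℕ)
    -- law of `G₂`: uniform `k`-subset thinned by Bernoulli(1-ε)
    (hG₂ : ∀ B : Finset α, P {ω | G₂ ω = B} =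
      ENNReal.ofReal (if B.card ≤ k then
        ((n - B.card).choose (k - B.card) : ℝ) / (n.choose k) *
          (1 - ε) ^ B.card * ε ^ (k - B.card) else 0))
    -- law of `R`: binomial(n, π)
    (hR : ∀ r : ℕ, P {ω | R ω = r} =
      ENNReal.ofReal ((n.choose r : ℝ) * π ^ r * (1 - π) ^ (n - r)))
    -- `R` is independent of `G₂`
    (hRG₂ : ∀ (B : Finset α) (r : ℕ),
      P ({ω | G₂ ω = B} ∩ {ω | R ω = r}) = P {ω | G₂ ω = B} * P {ω | R ω = r})
    -- `G₃` always has exactly `R` elements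
    (hcard : ∀ ω, (G₃ ω).card = R ω)
    -- on the good event, `G₃` is a uniform `R`-subset of `G₂`
    (hgood : ∀ (B : Finset α) (r : ℕ) (A : Finset α), M ≤ (B.card : ℝ) → (r : ℝ) ≤ M →
      P ({ω | G₃ ω = A} ∩ {ω | G₂ ω = B} ∩ {ω | R ω = r}) =
        if A ⊆ B ∧ A.card = r then
          P ({ω | G₂ ω = B} ∩ {ω | R ω = r}) / (B.card.choose r : ℝ≥0∞) else 0)
    -- otherwise, `G₃` is a uniform `R`-subset of the whole ground set
    (hbad : ∀ (B : Finset α) (r : ℕ) (A : Finset α), ¬(M ≤ (B.card : ℝ) ∧ (r : ℝ) ≤ M) →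
      P ({ω | G₃ ω = A} ∩ {ω | G₂ ω = B} ∩ {ω | R ω = r}) =
        if A.card = r then
          P ({ω | G₂ ω = B} ∩ {ω | R ω = r}) / (n.choose r : ℝ≥0∞) else 0) :
    (∀ A : Finset α, P {ω | G₃ ω = A} =
        ENNReal.ofReal (π ^ A.card * (1 - π) ^ (n - A.card))) ∧
      P {ω | M ≤ ((G₂ ω).card : ℝ) ∧ (R ω : ℝ) ≤ M} ≤ P {ω | G₃ ω ⊆ G₂ ω} := by
  subst hn
  have hg₀ := thinnedUniformWeight_nonneg hε.le hε1.le (Fintype.card α) k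
  have hq₀ := binomialWeight_nonneg hπ.le hπ1.le (Fintype.card α)
  have hatom := measure_coupling_atom (q := binomialWeight _ π) hg₀ hG₂ hR hRG₂ hcard hgood hbad
  refine ⟨fun A => ?_, measure_le_measure_subset_of_null (fun B r => M ≤ (#B : ℝ) ∧ (r : ℝ) ≤ M)
    fun B r A hM hAB => (hgood B r A hM.1 hM.2).trans (if_neg fun h => hAB h.1)⟩
  have hlaw := measure_fst_eq_of_atoms (fun ω => (G₃ ω, G₂ ω)) hg₀ hq₀
    (sum_thinnedUniformWeight_card hk ε) (sum_binomialWeight le_rfl π) hatom A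
  rwa [binomialWeight_div_choose (card_le_univ A)] at hlaw
end

section
/- If the unit cube is (n,u)-good in the k-fractal percolation process, then percolation occurs in D_k^n: there exists an edge-connected chain of retained level-n cubes joining the face {0}×[0,1]^{d-1} to the face {1}×[0,1]^{d-1}. -/
/-- Adjacency of the lattice `𝕃^d`: `x ~ y` iff `x ≠ y`, `|x_i - y_i| ≤ 1` for all `i`
and `x_i = y_i` for some `i` (equivalently, for `d ≥ 2`, the corresponding cubes share at
least an edge). -/
def latAdj {d : ℕ} (x y : Fin d → ℤ) : Prop :=
  x ≠ y ∧ (∀ i, |x i - y i| ≤ 1) ∧ ∃ i, x i = y i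

/-- The lattice vertex of `{0,…,N^m-1}^d` corresponding to the level-`m` cube with digit
word `I`. -/
def vert (N : ℕ) {d m : ℕ} (I : Fin m → Fin d → Fin N) : Fin d → ℤ :=
  fun i => ∑ j : Fin m, (I j i : ℤ) * (N : ℤ) ^ (m - 1 - (j : ℕ))

/-- The corner `c(I)` of the level-`m` cube with digit word `I`. -/
noncomputable def corner (N : ℕ) {d m : ℕ} (I : Fin m → Fin d → Fin N) : Fin d → ℝ :=
  fun i => ∑ j : Fin m, (I j i : ℝ) / (N : ℝ) ^ ((j : ℕ) + 1)

/-- The level-`m` cube `C(I) = c(I) + [0, N^{-m}]^d`. -/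
def cube (N : ℕ) {d m : ℕ} (I : Fin m → Fin d → Fin N) : Set (Fin d → ℝ) :=
  {x | ∀ i, corner N I i ≤ x i ∧ x i ≤ corner N I i + 1 / (N : ℝ) ^ m}

/-- `L` is an edge (1-dimensional face) of the cube with corner `q` and side length `s`. -/
def isEdgeOf {d : ℕ} (q : Fin d → ℝ) (s : ℝ) (L : Set (Fin d → ℝ)) : Prop :=
  ∃ (r : Fin d) (a : Fin d → Bool),
    L = {x | q r ≤ x r ∧ x r ≤ q r + s ∧ ∀ i, i ≠ r → x i = q i + (if a i then s else 0)}

/-!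
A good cube contains an edge-connected set of good retained children meeting every edge of the
cube, and edge-adjacent good cubes have edge-adjacent such children. Hence any chain of good
cubes at level `m` lifts to a chain of good children at level `m + 1`: walk inside each
parent's witness set and cross to the next parent through a linked pair of children. Starting
the lifted chain at a child touching the face `x₀ = 0` and ending it at one touching `x₀ = 1`
(they exist because edges of the parent lying in these faces meet `u ≥ 1` children), induction
from the unit cube down to level `n` gives the crossing.
-/

open Relation

section Relations

variable {α β : Type*}

theorem exists_fin_walk_of_reflTransGen {r : α → α → Prop} {a b : α} (h : ReflTransGen r a b) :
    ∃ (l : ℕ) (w : Fin (l + 1) → α), w 0 = a ∧ w (Fin.last l) = b ∧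
      ∀ t : Fin l, r (w t.castSucc) (w t.succ) := by
  induction h using ReflTransGen.head_induction_on with
  | refl => exact ⟨0, fun _ => b, rfl, rfl, fun t => t.elim0⟩
  | head hac _ ih =>
    obtain ⟨l, w, hw0, hwl, hw⟩ := ih
    refine ⟨l + 1, Fin.cons _ w, rfl, by simpa using hwl, fun t => ?_⟩
    induction t using Fin.cases with
    | zero => simpa [hw0] using hac
    | succ t => simpa [← Fin.succ_castSucc] using hw t

theorem reflTransGen_of_fibers {r : α → α → Prop} {s : β → β → Prop} {S : Set α}
    (F : α → Set β) (hconn : ∀ a ∈ S, ∀ b ∈ F a, ∀ b' ∈ F a, ReflTransGen s b b')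
    (hlink : ∀ a ∈ S, ∀ a' ∈ S, r a a' → ∃ b ∈ F a, ∃ b' ∈ F a', s b b')
    {a a' : α} (ha : a ∈ S) (h : ReflTransGen (fun x y => x ∈ S ∧ y ∈ S ∧ r x y) a a')
    {b b' : β} (hb : b ∈ F a) (hb' : b' ∈ F a') : ReflTransGen s b b' := by
  induction h generalizing b' with
  | refl => exact hconn a ha b hb b' hb'
  | tail _ hcd ih =>
    obtain ⟨hc, hd, hr⟩ := hcd
    obtain ⟨b₁, hb₁, b₂, hb₂, hs⟩ := hlink _ hc _ hd hr
    exact ((ih hb₁).tail hs).trans (hconn _ hd b₂ hb₂ b' hb')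

end Relations

section Geometry

variable {N d m : ℕ}

lemma corner_snoc (I : Fin m → Fin d → Fin N) (j : Fin d → Fin N) (i : Fin d) :
    corner N (Fin.snoc I j) i = corner N I i + (j i : ℝ) / (N : ℝ) ^ (m + 1) := by
  simp [corner, Fin.sum_univ_castSucc]

lemma digit_eq_zero_of_mem_cube_snoc {I : Fin m → Fin d → Fin N} {j : Fin d → Fin N}
    {x : Fin d → ℝ} {i : Fin d} (hx : x ∈ cube N (Fin.snoc I j)) (hxi : x i = corner N I i) :
    (j i : ℕ) = 0 := by
  have hN : (0 : ℝ) < N := by exact_mod_cast (j i).pos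
  have hlow := (hx i).1
  rw [corner_snoc, hxi] at hlow
  have : ((j i : ℕ) : ℝ) ≤ 0 := by
    simpa using (div_le_iff₀ (by positivity)).1 (by linarith : (j i : ℝ) / (N : ℝ) ^ (m + 1) ≤ 0)
  exact_mod_cast this.antisymm (Nat.cast_nonneg _)

lemma digit_eq_last_of_mem_cube_snoc {I : Fin m → Fin d → Fin N} {j : Fin d → Fin N}
    {x : Fin d → ℝ} {i : Fin d} (hx : x ∈ cube N (Fin.snoc I j))
    (hxi : x i = corner N I i + 1 / (N : ℝ) ^ m) : (j i : ℕ) = N - 1 := by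
  have hN : (0 : ℝ) < N := by exact_mod_cast (j i).pos
  have hup := (hx i).2
  rw [corner_snoc, hxi] at hup
  have : (N : ℝ) ≤ (j i : ℕ) + 1 := by
    have h : (N : ℝ) / (N : ℝ) ^ (m + 1) ≤ ((j i : ℕ) + 1) / (N : ℝ) ^ (m + 1) := by
      have hside : (N : ℝ) / (N : ℝ) ^ (m + 1) = 1 / (N : ℝ) ^ m := by
        field_simp
        ring
      rw [hside, add_div]
      linarith
    exact (div_le_div_iff_of_pos_right (by positivity)).1 h
  have : N ≤ (j i : ℕ) + 1 := by exact_mod_cast this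
  have := (j i).isLt
  omega

lemma exists_mem_cube_snoc_of_face {I : Fin m → Fin d → Fin N} {H : Finset (Fin d → Fin N)}
    {u : ℕ} (hu : 1 ≤ u)
    (hedges : ∀ L, isEdgeOf (corner N I) (1 / (N : ℝ) ^ m) L →
      u ≤ Set.ncard {j | j ∈ H ∧ (cube N (Fin.snoc I j) ∩ L).Nonempty})
    {i r : Fin d} (hir : i ≠ r) (b : Bool) :
    ∃ j ∈ H, ∃ x ∈ cube N (Fin.snoc I j),
      x i = corner N I i + if b then 1 / (N : ℝ) ^ m else 0 := by
  obtain ⟨j, hj, x, hx, hxL⟩ :=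
    Set.nonempty_of_ncard_ne_zero
      (Nat.one_le_iff_ne_zero.1 (hu.trans (hedges _ ⟨r, fun _ => b, rfl⟩)))
  exact ⟨j, hj, x, hx, hxL.2.2 i hir⟩

end Geometry

/-- A level-`m` cube touches the face `x_i = 0` (resp. `x_i = 1`) iff all its `i`-th digits
are `0` (resp. `N - 1`). -/
def Percolates (N : ℕ) {d : ℕ} (i : Fin d) {m : ℕ} (S : Set (Fin m → Fin d → Fin N)) : Prop :=
  ∃ I₀ ∈ S, ∃ I₁ ∈ S, (∀ k, (I₀ k i : ℕ) = 0) ∧ (∀ k, (I₁ k i : ℕ) = N - 1) ∧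
    ReflTransGen (fun I I' => I ∈ S ∧ I' ∈ S ∧ latAdj (vert N I) (vert N I')) I₀ I₁

lemma forall_snoc_digit_eq {N d m : ℕ} {I : Fin m → Fin d → Fin N} {j : Fin d → Fin N}
    {i : Fin d} {c : ℕ} (hI : ∀ k, (I k i : ℕ) = c) (hj : (j i : ℕ) = c) :
    ∀ k, (Fin.snoc (α := fun _ => Fin d → Fin N) I j k i : ℕ) = c :=
  Fin.forall_fin_succ'.2 ⟨by simpa using hI, by simpa using hj⟩

theorem Percolates.snoc {N d m u : ℕ} {S : Set (Fin m → Fin d → Fin N)}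
    {T : Set (Fin (m + 1) → Fin d → Fin N)} {H : (Fin m → Fin d → Fin N) → Finset (Fin d → Fin N)}
    {i r : Fin d} (hir : i ≠ r) (hu : 1 ≤ u)
    (hHmem : ∀ I ∈ S, ∀ j ∈ H I, Fin.snoc I j ∈ T)
    (hHconn : ∀ I ∈ S, ∀ a ∈ H I, ∀ b ∈ H I,
      ReflTransGen (fun x y => x ∈ H I ∧ y ∈ H I ∧
        latAdj (vert N (Fin.snoc I x)) (vert N (Fin.snoc I y))) a b)
    (hedges : ∀ I ∈ S, ∀ L, isEdgeOf (corner N I) (1 / (N : ℝ) ^ m) L →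
      u ≤ Set.ncard {j | j ∈ H I ∧ (cube N (Fin.snoc I j) ∩ L).Nonempty})
    (hlink : ∀ I ∈ S, ∀ I' ∈ S, latAdj (vert N I) (vert N I') →
      ∃ j ∈ H I, ∃ j' ∈ H I', latAdj (vert N (Fin.snoc I j)) (vert N (Fin.snoc I' j')))
    (h : Percolates N i S) : Percolates N i T := by
  obtain ⟨I₀, hI₀, I₁, hI₁, hI₀i, hI₁i, hpath⟩ := h
  obtain ⟨a, ha, x, hx, hxi⟩ := exists_mem_cube_snoc_of_face hu (hedges I₀ hI₀) hir false
  obtain ⟨e, he, y, hy, hyi⟩ := exists_mem_cube_snoc_of_face hu (hedges I₁ hI₁) hir true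
  refine ⟨_, hHmem I₀ hI₀ a ha, _, hHmem I₁ hI₁ e he,
    forall_snoc_digit_eq hI₀i (digit_eq_zero_of_mem_cube_snoc hx (by simpa using hxi)),
    forall_snoc_digit_eq hI₁i (digit_eq_last_of_mem_cube_snoc hy (by simpa using hyi)),
    reflTransGen_of_fibers (fun I => Fin.snoc I '' H I) ?_ ?_ hI₀ hpath ⟨a, ha, rfl⟩
      ⟨e, he, rfl⟩⟩
  · rintro I hI _ ⟨x, hx, rfl⟩ _ ⟨y, hy, rfl⟩
    exact (hHconn I hI x hx y hy).lift _ fun x y ⟨hx, hy, hxy⟩ =>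
      ⟨hHmem I hI x hx, hHmem I hI y hy, hxy⟩
  · intro I hI I' hI' hII'
    obtain ⟨j, hj, j', hj', hjj'⟩ := hlink I hI I' hI' hII'
    exact ⟨_, ⟨j, hj, rfl⟩, _, ⟨j', hj', rfl⟩, hHmem I hI j hj, hHmem I' hI' j' hj', hjj'⟩

/-- Lemma 10 of the paper: if the unit cube is `(n,u)`-good, then percolation occurs in
`D_k^n`, i.e. there is an edge-connected chain of retained level-`n` cubes joining the face
`{x₀ = 0}` of `[0,1]^d` to the face `{x₀ = 1}`. Here `Z m I` is the (cumulative) retention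
indicator of the cube `C(I)`, `good` is the goodness predicate and `H m I ⊆ J^d` is the
edge-connected witness set of retained good children of a good cube `C(I)`, satisfying:
(i) every edge of `C(I)` meets at least `u` cubes of `H(I)`; (ii) for any two good
edge-adjacent level-`m` cubes, some cube of `H(I)` shares an edge with some cube of
`H(I')`; and every level-`n` cube is good. -/
theorem stmt13 (N d n u : ℕ) (hd : 2 ≤ d) (hu : 1 ≤ u)
    (Z : (m : ℕ) → (Fin m → Fin d → Fin N) → Prop)
    (good : (m : ℕ) → (Fin m → Fin d → Fin N) → Prop)
    (H : (m : ℕ) → (Fin m → Fin d → Fin N) → Finset (Fin d → Fin N))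
    (hHmem : ∀ m, m < n → ∀ I : Fin m → Fin d → Fin N, good m I →
      ∀ j ∈ H m I, good (m + 1) (Fin.snoc I j) ∧ Z (m + 1) (Fin.snoc I j))
    (hHconn : ∀ m, m < n → ∀ I : Fin m → Fin d → Fin N, good m I →
      ∀ a ∈ H m I, ∀ b ∈ H m I,
        Relation.ReflTransGen
          (fun x y => x ∈ H m I ∧ y ∈ H m I ∧
            latAdj (vert N (Fin.snoc I x)) (vert N (Fin.snoc I y))) a b)
    (hedges : ∀ m, m < n → ∀ I : Fin m → Fin d → Fin N, good m I →
      ∀ L : Set (Fin d → ℝ), isEdgeOf (corner N I) (1 / (N : ℝ) ^ m) L →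
        u ≤ Set.ncard {j | j ∈ H m I ∧ (cube N (Fin.snoc I j) ∩ L).Nonempty})
    (hlink : ∀ m, m < n → ∀ I I' : Fin m → Fin d → Fin N,
      good m I → good m I' → latAdj (vert N I) (vert N I') →
      ∃ j ∈ H m I, ∃ j' ∈ H m I',
        latAdj (vert N (Fin.snoc I j)) (vert N (Fin.snoc I' j')))
    (hZroot : Z 0 Fin.elim0)
    (hgood0 : good 0 Fin.elim0) :
    ∃ (l : ℕ) (w : Fin (l + 1) → Fin n → Fin d → Fin N),
      (∀ t, Z n (w t)) ∧
      (∀ t : Fin l, latAdj (vert N (w t.castSucc)) (vert N (w t.succ))) ∧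
      (∀ j : Fin n, (w 0 j ⟨0, by omega⟩ : ℕ) = 0) ∧
      (∀ j : Fin n, (w (Fin.last l) j ⟨0, by omega⟩ : ℕ) = N - 1) := by
  have hir : (⟨0, by omega⟩ : Fin d) ≠ ⟨1, by omega⟩ := by simp
  have hperc : ∀ m ≤ n,
      Percolates N ⟨0, by omega⟩ {I : Fin m → Fin d → Fin N | good m I ∧ Z m I} := by
    intro m hm
    induction m with
    | zero =>
      exact ⟨_, ⟨hgood0, hZroot⟩, _, ⟨hgood0, hZroot⟩, fun k => k.elim0, fun k => k.elim0, .refl⟩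
    | succ m ih =>
      exact (ih (by omega)).snoc hir hu (fun I hI j hj => hHmem m hm I hI.1 j hj)
        (fun I hI => hHconn m hm I hI.1) (fun I hI => hedges m hm I hI.1)
        (fun I hI I' hI' => hlink m hm I I' hI.1 hI'.1)
  obtain ⟨I₀, hI₀, I₁, -, hI₀0, hI₁0, hpath⟩ := hperc n le_rfl
  obtain ⟨l, w, rfl, rfl, hw⟩ := exists_fin_walk_of_reflTransGen hpath
  refine ⟨l, w, fun t => ?_, fun t => (hw t).2.2, hI₀0, hI₁0⟩
  induction t using Fin.cases with
  | zero => exact hI₀.2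
  | succ t => exact (hw t).2.1.2
end

section
/- In fat fractal percolation on [0,1]^d, if P(C(i_1,…,i_n) ⊆ D_fat) > 0 for some level-n cube, then by translation invariance and the FKG inequality P(D_fat = [0,1]^d) > 0; since P(D_fat = [0,1]^d) = ∏_{n=1}^∞ p_n^{N^{dn}}, it follows that if ∏_{n=1}^∞ p_n^{N^{dn}} = 0 then D_fat has empty interior almost surely. -/
/-!
`D_fat = [0,1]^d` exactly when every flag is true, because the centre of a level-`m` cube lies in
no other level-`m` cube. If `C(I) ⊆ D_fat` for a level-`m` word `I`, then every descendant of `I`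
is retained, an event of probability at most `Q_K = ∏_{k=1}^{K} p_{m+k}^{N^{dk}}` for every `K`.
Since the flags up to level `m + K` split into those up to level `m` and `N^{dm}` copies of the
descendants of a level-`m` cube, `∏_{n=1}^{m+K} p_n^{N^{dn}} = (∏_{n=1}^{m} p_n^{N^{dn}}) · Q_K^{N^{dm}}`,
so `P(C(I) ⊆ D_fat) > 0` bounds these products away from `0`; no FKG inequality is needed.
Finally, an interior point of `D_fat` lies in a cube inside `D_fat`, so `D_fat` has non-empty
interior only on a countable union of events `C(I) ⊆ D_fat`, all null when the product vanishes.
-/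

open MeasureTheory

/-- A configuration of fat fractal percolation: a retention decision for every level-`m`
cube, each cube being encoded by its digit word `I : Fin m → Fin d → Fin N`. -/
abbrev Config (N d : ℕ) := (m : ℕ) → (Fin m → Fin d → Fin N) → Bool

/-- A cube is (cumulatively) retained if it and all its ancestors are retained. -/
def retained (N d : ℕ) (ω : Config N d) {m : ℕ} (I : Fin m → Fin d → Fin N) : Prop :=
  ∀ l, ∀ h : l ≤ m, ω l (fun j => I (Fin.castLE h j)) = true

/-- The limit set `D_fat = ⋂_m ⋃ {C(I) : I retained at level m}`. -/
def limitSet (N d : ℕ) (ω : Config N d) : Set (Fin d → ℝ) :=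
  ⋂ m : ℕ, ⋃ I ∈ {I : Fin m → Fin d → Fin N | retained N d ω I}, cube N I

open Finset

variable {N d : ℕ}

def cubeIndex {m : ℕ} : (Fin m → Fin d → Fin N) ≃ (Fin d → Fin (N ^ m)) :=
  (Equiv.piComm _).trans <| Equiv.piCongrRight fun _ =>
    (Fin.revPerm.arrowCongr (Equiv.refl _)).trans finFunctionFinEquiv

lemma cubeIndex_val {m : ℕ} (I : Fin m → Fin d → Fin N) (i : Fin d) :
    (cubeIndex I i : ℕ) = ∑ j : Fin m, (I j.rev i : ℕ) * N ^ (j : ℕ) := by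
  simp [cubeIndex]

lemma corner_eq_cubeIndex (hN : 0 < N) {m : ℕ} (I : Fin m → Fin d → Fin N) (i : Fin d) :
    corner N I i = (cubeIndex I i : ℕ) / (N : ℝ) ^ m := by
  rw [cubeIndex_val, ← Equiv.sum_comp Fin.revPerm]
  push_cast
  rw [sum_div]
  refine sum_congr rfl fun j _ => ?_
  have hm : (N : ℝ) ^ m = N ^ (Fin.rev j : ℕ) * N ^ ((j : ℕ) + 1) := by
    rw [← pow_add, Fin.val_rev]; congr 1; omega
  have : (N : ℝ) ^ (Fin.rev j : ℕ) ≠ 0 := by positivity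
  simp only [Fin.revPerm_apply, Fin.rev_rev, hm]
  field_simp

lemma corner_nonneg {m : ℕ} (I : Fin m → Fin d → Fin N) (i : Fin d) : 0 ≤ corner N I i := by
  unfold corner; positivity

lemma corner_add_le_one (hN : 0 < N) {m : ℕ} (I : Fin m → Fin d → Fin N) (i : Fin d) :
    corner N I i + 1 / (N : ℝ) ^ m ≤ 1 := by
  have hNm : (0 : ℝ) < (N : ℝ) ^ m := by positivity
  rw [corner_eq_cubeIndex hN, ← add_div, div_le_one hNm]
  exact_mod_cast (cubeIndex I i).isLt

lemma cube_subset_Icc (hN : 0 < N) {m : ℕ} (I : Fin m → Fin d → Fin N) :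
    cube N I ⊆ Set.Icc 0 1 := fun _ hx =>
  ⟨fun i => (corner_nonneg I i).trans (hx i).1,
    fun i => (hx i).2.trans (corner_add_le_one hN I i)⟩

lemma corner_append {m k : ℕ} (I : Fin m → Fin d → Fin N) (s : Fin k → Fin d → Fin N)
    (i : Fin d) : corner N (Fin.append I s) i = corner N I i + corner N s i / (N : ℝ) ^ m := by
  simp only [corner, Fin.sum_univ_add, Fin.append_left, Fin.append_right, Fin.val_castAdd,
    Fin.val_natAdd, sum_div, div_div, ← pow_add]
  congr 2 with j
  ring_nf

lemma cube_append_subset (hN : 0 < N) {m k : ℕ} (I : Fin m → Fin d → Fin N)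
    (s : Fin k → Fin d → Fin N) : cube N (Fin.append I s) ⊆ cube N I := by
  intro x hx i
  have hNm : (0 : ℝ) < (N : ℝ) ^ m := by positivity
  have h0 : 0 ≤ corner N s i / (N : ℝ) ^ m := div_nonneg (corner_nonneg s i) hNm.le
  have h1 : corner N s i / (N : ℝ) ^ m + 1 / (N : ℝ) ^ (m + k) ≤ 1 / (N : ℝ) ^ m := by
    have hsplit : corner N s i / (N : ℝ) ^ m + 1 / (N : ℝ) ^ (m + k)
        = (corner N s i + 1 / (N : ℝ) ^ k) / (N : ℝ) ^ m := by
      rw [pow_add]; field_simp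
    rw [hsplit]
    gcongr
    exact corner_add_le_one hN s i
  have := hx i
  rw [corner_append] at this
  constructor <;> linarith [this.1, this.2]

lemma exists_nat_div_le_and_le_succ_div {x : ℝ} (hx : x ∈ Set.Icc (0 : ℝ) 1) {n : ℕ}
    (hn : 0 < n) : ∃ k < n, (k : ℝ) / n ≤ x ∧ x ≤ (k + 1 : ℝ) / n := by
  have hn' : (0 : ℝ) < n := by exact_mod_cast hn
  rcases hx.2.lt_or_eq with hx1 | hx1
  · refine ⟨⌊x * n⌋₊, (Nat.floor_lt (by nlinarith [hx.1])).2 (by nlinarith), ?_, ?_⟩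
    · rw [div_le_iff₀ hn']; exact Nat.floor_le (by nlinarith [hx.1])
    · rw [le_div_iff₀ hn']; exact (Nat.lt_floor_add_one _).le
  · refine ⟨n - 1, by omega, ?_, ?_⟩ <;> rw [hx1]
    · rw [div_le_one hn']; exact_mod_cast Nat.sub_le n 1
    · rw [Nat.cast_sub hn, Nat.cast_one, sub_add_cancel, div_self hn'.ne']

lemma exists_mem_cube (hN : 0 < N) (m : ℕ) {x : Fin d → ℝ} (hx : x ∈ Set.Icc 0 1) :
    ∃ I : Fin m → Fin d → Fin N, x ∈ cube N I := by
  choose k hk hkx using fun i => exists_nat_div_le_and_le_succ_div ⟨hx.1 i, hx.2 i⟩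
    (pow_pos hN m)
  refine ⟨cubeIndex.symm fun i => ⟨k i, hk i⟩, fun i => ?_⟩
  rw [corner_eq_cubeIndex hN, Equiv.apply_symm_apply, ← add_div]
  exact_mod_cast hkx i

noncomputable def cubeCenter (N : ℕ) {m : ℕ} (I : Fin m → Fin d → Fin N) : Fin d → ℝ :=
  fun i => corner N I i + 1 / (2 * (N : ℝ) ^ m)

lemma cubeCenter_mem_cube (hN : 0 < N) {m : ℕ} (I : Fin m → Fin d → Fin N) :
    cubeCenter N I ∈ cube N I := by
  intro i
  have hNm : (0 : ℝ) < (N : ℝ) ^ m := by positivity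
  refine ⟨le_add_of_nonneg_right (by positivity), ?_⟩
  unfold cubeCenter
  gcongr
  linarith

lemma eq_of_cubeCenter_mem_cube (hN : 0 < N) {m : ℕ} {I J : Fin m → Fin d → Fin N}
    (h : cubeCenter N I ∈ cube N J) : J = I := by
  refine cubeIndex.injective (funext fun i => Fin.ext ?_)
  have hNm : (0 : ℝ) < (N : ℝ) ^ m := by positivity
  have hc : cubeCenter N I i = ((cubeIndex I i : ℕ) + 1 / 2 : ℝ) / (N : ℝ) ^ m := by
    rw [cubeCenter, corner_eq_cubeIndex hN]; ring
  obtain ⟨h1, h2⟩ := h i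
  rw [hc, corner_eq_cubeIndex hN, div_le_div_iff_of_pos_right hNm] at h1
  rw [hc, corner_eq_cubeIndex hN, ← add_div, div_le_div_iff_of_pos_right hNm] at h2
  have hJI : (cubeIndex J i : ℕ) < cubeIndex I i + 1 := by rify; linarith
  have hIJ : (cubeIndex I i : ℕ) < cubeIndex J i + 1 := by rify; linarith
  omega

lemma dist_le_of_mem_cube {m : ℕ} {I : Fin m → Fin d → Fin N} {x y : Fin d → ℝ}
    (hx : x ∈ cube N I) (hy : y ∈ cube N I) : dist x y ≤ 1 / (N : ℝ) ^ m := by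
  refine (dist_pi_le_iff (by positivity)).2 fun i => ?_
  rw [Real.dist_eq, abs_sub_le_iff]
  constructor <;> linarith [hx i, hy i]

lemma mem_limitSet_iff {ω : Config N d} {x : Fin d → ℝ} :
    x ∈ limitSet N d ω ↔ ∀ m, ∃ I : Fin m → Fin d → Fin N, retained N d ω I ∧ x ∈ cube N I := by
  simp [limitSet]

lemma retained.apply_self {ω : Config N d} {m : ℕ} {I : Fin m → Fin d → Fin N}
    (h : retained N d ω I) : ω m I = true :=
  h m le_rfl

lemma limitSet_subset_Icc (hN : 0 < N) (ω : Config N d) : limitSet N d ω ⊆ Set.Icc 0 1 :=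
  fun _ hx => have ⟨I, _, hxI⟩ := mem_limitSet_iff.1 hx 0; cube_subset_Icc hN I hxI

lemma apply_of_cube_subset_limitSet (hN : 0 < N) {ω : Config N d} {m : ℕ}
    {I : Fin m → Fin d → Fin N} (h : cube N I ⊆ limitSet N d ω) : ω m I = true := by
  obtain ⟨J, hJ, hcJ⟩ := mem_limitSet_iff.1 (h (cubeCenter_mem_cube hN I)) m
  rw [← eq_of_cubeCenter_mem_cube hN hcJ]
  exact hJ.apply_self

lemma limitSet_eq_Icc_iff (hN : 0 < N) (ω : Config N d) :
    limitSet N d ω = Set.Icc 0 1 ↔ ∀ m (I : Fin m → Fin d → Fin N), ω m I = true := by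
  refine ⟨fun h m I => apply_of_cube_subset_limitSet hN (h ▸ cube_subset_Icc hN I), fun h => ?_⟩
  refine (limitSet_subset_Icc hN ω).antisymm fun x hx => mem_limitSet_iff.2 fun m => ?_
  obtain ⟨I, hI⟩ := exists_mem_cube hN m hx
  exact ⟨I, fun l _ => h l _, hI⟩

lemma exists_cube_subset_limitSet (hN : 1 < N) {ω : Config N d}
    (h : (interior (limitSet N d ω)).Nonempty) :
    ∃ m, ∃ I : Fin m → Fin d → Fin N, cube N I ⊆ limitSet N d ω := by
  have hN0 : 0 < N := by omega
  obtain ⟨x, hx⟩ := h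
  obtain ⟨ε, hε, hball⟩ := Metric.mem_nhds_iff.1 (mem_interior_iff_mem_nhds.1 hx)
  obtain ⟨m, hm⟩ := exists_pow_lt_of_lt_one hε (inv_lt_one_of_one_lt₀ (Nat.one_lt_cast.2 hN))
  have hxIcc := limitSet_subset_Icc hN0 ω (interior_subset hx)
  obtain ⟨I, hxI⟩ := exists_mem_cube hN0 m hxIcc
  refine ⟨m, I, fun y hy => hball ?_⟩
  rw [Metric.mem_ball]
  calc dist y x ≤ 1 / (N : ℝ) ^ m := dist_le_of_mem_cube hy hxI
    _ = ((N : ℝ)⁻¹) ^ m := by rw [one_div, inv_pow]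
    _ < ε := hm

def allFlagsOn (F : Finset (Σ m, Fin m → Fin d → Fin N)) : Set (Config N d) :=
  ⋂ s ∈ F, {ω | ω s.1 s.2 = true}

lemma allFlagsOn_anti {F G : Finset (Σ m, Fin m → Fin d → Fin N)} (h : F ⊆ G) :
    allFlagsOn G ⊆ allFlagsOn F :=
  Set.biInter_subset_biInter_left h

lemma measurableSet_allFlagsOn (F : Finset (Σ m, Fin m → Fin d → Fin N)) :
    MeasurableSet (allFlagsOn F) :=
  F.measurableSet_biInter fun s _ =>
    (by fun_prop : Measurable fun ω : Config N d => ω s.1 s.2) (measurableSet_singleton true)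

def levelsUpTo (N d M : ℕ) : Finset (Σ m, Fin m → Fin d → Fin N) :=
  (range (M + 1)).sigma fun _ => univ

lemma levelsUpTo_mono : Monotone (levelsUpTo N d) := fun _ _ h =>
  sigma_mono (range_subset_range.2 (by omega)) fun _ => subset_rfl

lemma iInter_allFlagsOn_levelsUpTo :
    ⋂ M, allFlagsOn (levelsUpTo N d M) = {ω | ∀ m (I : Fin m → Fin d → Fin N), ω m I = true} := by
  ext ω
  simp only [allFlagsOn, levelsUpTo, Set.mem_iInter, mem_sigma, mem_range, mem_univ, and_true,
    Set.mem_ofPred_eq]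
  exact ⟨fun h m I => h m ⟨m, I⟩ (Nat.lt_succ_self m), fun h _ s _ => h s.1 s.2⟩

lemma append_sigma_injective {m : ℕ} (I : Fin m → Fin d → Fin N) :
    Function.Injective fun s : Σ k, Fin (k + 1) → Fin d → Fin N =>
      (⟨m + (s.1 + 1), Fin.append I s.2⟩ : Σ l, Fin l → Fin d → Fin N) := by
  rintro ⟨k, s⟩ ⟨k', s'⟩ h
  simp only [Sigma.mk.inj_iff, add_right_inj, Nat.add_right_cancel_iff] at h
  obtain ⟨rfl, hs⟩ := h
  congr
  funext j
  simpa using congrFun (eq_of_heq hs) (Fin.natAdd m j)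

def descendants {m : ℕ} (I : Fin m → Fin d → Fin N) (K : ℕ) :
    Finset (Σ l, Fin l → Fin d → Fin N) :=
  ((range K).sigma fun _ => univ).map ⟨_, append_sigma_injective I⟩

lemma cube_subset_limitSet_subset_allFlagsOn_descendants (hN : 0 < N) {m : ℕ}
    (I : Fin m → Fin d → Fin N) (K : ℕ) :
    {ω | cube N I ⊆ limitSet N d ω} ⊆ allFlagsOn (descendants I K) := by
  intro ω hω
  simp only [allFlagsOn, descendants, Set.mem_iInter, mem_map]
  rintro _ ⟨⟨_, s⟩, -, rfl⟩
  exact apply_of_cube_subset_limitSet hN ((cube_append_subset hN I s).trans hω)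

lemma prod_sigma_univ_words {M : Type*} [CommMonoid M] (S : Finset ℕ) (f : ℕ → ℕ) (g : ℕ → M) :
    ∏ s ∈ S.sigma (fun k => (univ : Finset (Fin (f k) → Fin d → Fin N))), g s.1 =
      ∏ k ∈ S, g k ^ N ^ (d * f k) := by
  simp [prod_sigma, pow_mul]

lemma prod_range_add_eq_mul_prod_pow {M : Type*} [CommMonoid M] (f : ℕ → M) (N d m K : ℕ) :
    ∏ n ∈ range (m + K), f (n + 1) ^ N ^ (d * (n + 1)) =
      (∏ n ∈ range m, f (n + 1) ^ N ^ (d * (n + 1))) *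
        (∏ k ∈ range K, f (m + (k + 1)) ^ N ^ (d * (k + 1))) ^ N ^ (d * m) := by
  rw [prod_range_add, ← prod_pow]
  congr 1
  refine prod_congr rfl fun k _ => ?_
  rw [← pow_mul, ← pow_add]
  ring_nf

section Independence

open ProbabilityTheory

variable {μ : Measure (Config N d)} {p : ℕ → ℝ}

lemma measure_allFlagsOn
    (hmarg : ∀ (m : ℕ) (I : Fin m → Fin d → Fin N), μ {ω | ω m I = true} = ENNReal.ofReal (p m))
    (hindep : iIndepFun (fun (s : Σ m, Fin m → Fin d → Fin N) (ω : Config N d) => ω s.1 s.2) μ)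
    (F : Finset (Σ m, Fin m → Fin d → Fin N)) :
    μ (allFlagsOn F) = ∏ s ∈ F, ENNReal.ofReal (p s.1) := by
  calc μ (allFlagsOn F) = ∏ s ∈ F, μ {ω | ω s.1 s.2 = true} :=
        hindep.measure_inter_preimage_eq_mul F (sets := fun _ => {true})
          fun _ _ => measurableSet_singleton true
    _ = ∏ s ∈ F, ENNReal.ofReal (p s.1) := prod_congr rfl fun s _ => hmarg s.1 s.2

lemma measure_allFlagsOn_levelsUpTo
    (hmarg : ∀ (m : ℕ) (I : Fin m → Fin d → Fin N), μ {ω | ω m I = true} = ENNReal.ofReal (p m))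
    (hindep : iIndepFun (fun (s : Σ m, Fin m → Fin d → Fin N) (ω : Config N d) => ω s.1 s.2) μ)
    (hp0 : p 0 = 1) (M : ℕ) :
    μ (allFlagsOn (levelsUpTo N d M)) =
      ∏ n ∈ range M, ENNReal.ofReal (p (n + 1)) ^ N ^ (d * (n + 1)) := by
  rw [measure_allFlagsOn hmarg hindep, levelsUpTo]
  refine (prod_sigma_univ_words (range (M + 1)) id fun n => ENNReal.ofReal (p n)).trans ?_
  rw [prod_range_succ', hp0]
  simp

lemma measure_allFlagsOn_descendants
    (hmarg : ∀ (m : ℕ) (I : Fin m → Fin d → Fin N), μ {ω | ω m I = true} = ENNReal.ofReal (p m))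
    (hindep : iIndepFun (fun (s : Σ m, Fin m → Fin d → Fin N) (ω : Config N d) => ω s.1 s.2) μ)
    {m : ℕ} (I : Fin m → Fin d → Fin N) (K : ℕ) :
    μ (allFlagsOn (descendants I K)) =
      ∏ k ∈ range K, ENNReal.ofReal (p (m + (k + 1))) ^ N ^ (d * (k + 1)) := by
  rw [measure_allFlagsOn hmarg hindep, descendants, prod_map]
  exact prod_sigma_univ_words _ (· + 1) fun k => ENNReal.ofReal (p (m + (k + 1)))

lemma measure_limitSet_eq_Icc [IsFiniteMeasure μ] (hN : 0 < N) :
    μ {ω | limitSet N d ω = Set.Icc 0 1} = ⨅ M, μ (allFlagsOn (levelsUpTo N d M)) := by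
  simp_rw [limitSet_eq_Icc_iff hN, ← iInter_allFlagsOn_levelsUpTo]
  exact Antitone.measure_iInter (fun _ _ h => allFlagsOn_anti (levelsUpTo_mono h))
    (fun M => (measurableSet_allFlagsOn _).nullMeasurableSet) ⟨0, measure_ne_top μ _⟩

lemma measure_limitSet_eq_Icc_pos [IsFiniteMeasure μ] (hN : 0 < N)
    (hp : ∀ n, 0 < p n) (hp0 : p 0 = 1)
    (hmarg : ∀ (m : ℕ) (I : Fin m → Fin d → Fin N), μ {ω | ω m I = true} = ENNReal.ofReal (p m))
    (hindep : iIndepFun (fun (s : Σ m, Fin m → Fin d → Fin N) (ω : Config N d) => ω s.1 s.2) μ)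
    {m : ℕ} (I : Fin m → Fin d → Fin N) (hI : 0 < μ {ω | cube N I ⊆ limitSet N d ω}) :
    0 < μ {ω | limitSet N d ω = Set.Icc 0 1} := by
  set E := fun M => μ (allFlagsOn (levelsUpTo N d M))
  have hEm : E m ≠ 0 := by
    simp only [E, measure_allFlagsOn_levelsUpTo hmarg hindep hp0, prod_ne_zero_iff]
    exact fun n _ => pow_ne_zero _ (ENNReal.ofReal_pos.2 (hp _)).ne'
  have hsplit (K : ℕ) : E (m + K) = E m * μ (allFlagsOn (descendants I K)) ^ N ^ (d * m) := by
    simp only [E, measure_allFlagsOn_levelsUpTo hmarg hindep hp0,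
      measure_allFlagsOn_descendants hmarg hindep]
    exact prod_range_add_eq_mul_prod_pow (fun n => ENNReal.ofReal (p n)) N d m K
  have hbound (M : ℕ) : E m * μ {ω | cube N I ⊆ limitSet N d ω} ^ N ^ (d * m) ≤ E M :=
    calc _ ≤ E (m + M) := by
          rw [hsplit]
          gcongr
          exact cube_subset_limitSet_subset_allFlagsOn_descendants hN I M
      _ ≤ E M := measure_mono (allFlagsOn_anti (levelsUpTo_mono (by omega)))
  rw [measure_limitSet_eq_Icc hN]
  exact (pos_iff_ne_zero.2 (mul_ne_zero hEm (pow_ne_zero _ hI.ne'))).trans_le (le_iInf hbound)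

end Independence

theorem stmt15_general (N d : ℕ) (hN : 2 ≤ N)
    (p : ℕ → ℝ) (hp : ∀ m, 0 < p m ∧ p m ≤ 1) (hp0 : p 0 = 1)
    (μ : Measure (Config N d)) [IsProbabilityMeasure μ]
    (hmarg : ∀ (m : ℕ) (I : Fin m → Fin d → Fin N),
      μ {ω | ω m I = true} = ENNReal.ofReal (p m))
    (hindep : ProbabilityTheory.iIndepFun
      (fun (s : Σ m : ℕ, Fin m → Fin d → Fin N) (ω : Config N d) => ω s.1 s.2) μ) :
    ((∃ (m : ℕ) (I : Fin m → Fin d → Fin N),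
        0 < μ {ω | cube N I ⊆ limitSet N d ω}) →
      0 < μ {ω | limitSet N d ω = Set.Icc (0 : Fin d → ℝ) 1}) ∧
    (μ {ω | limitSet N d ω = Set.Icc (0 : Fin d → ℝ) 1} =
      ⨅ M : ℕ, ENNReal.ofReal (∏ m ∈ Finset.range M, p (m + 1) ^ (N ^ (d * (m + 1))))) ∧
    ((⨅ M : ℕ, ∏ m ∈ Finset.range M, p (m + 1) ^ (N ^ (d * (m + 1)))) = 0 →
      ∀ᵐ ω ∂μ, interior (limitSet N d ω) = ∅) := by
  have hN0 : 0 < N := by omega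
  have hpos : (∃ (m : ℕ) (I : Fin m → Fin d → Fin N), 0 < μ {ω | cube N I ⊆ limitSet N d ω}) →
      0 < μ {ω | limitSet N d ω = Set.Icc 0 1} := fun ⟨_, I, hI⟩ =>
    measure_limitSet_eq_Icc_pos hN0 (fun n => (hp n).1) hp0 hmarg hindep I hI
  have hfull : μ {ω | limitSet N d ω = Set.Icc 0 1} =
      ⨅ M : ℕ, ENNReal.ofReal (∏ m ∈ range M, p (m + 1) ^ (N ^ (d * (m + 1)))) := by
    simp_rw [measure_limitSet_eq_Icc hN0, measure_allFlagsOn_levelsUpTo hmarg hindep hp0,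
      ENNReal.ofReal_prod_of_nonneg fun n _ => pow_nonneg (hp (n + 1)).1.le _,
      ENNReal.ofReal_pow (hp _).1.le]
  refine ⟨hpos, hfull, fun h0 => ?_⟩
  have hnull : μ {ω | limitSet N d ω = Set.Icc 0 1} = 0 := by
    rw [hfull, ← ENNReal.ofReal_iInf, h0, ENNReal.ofReal_zero]
  have hcube (s : Σ m, Fin m → Fin d → Fin N) : μ {ω | cube N s.2 ⊆ limitSet N d ω} = 0 := by
    by_contra h
    exact (hpos ⟨s.1, s.2, pos_iff_ne_zero.2 h⟩).ne' hnull
  rw [ae_iff]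
  refine measure_mono_null (fun ω hω => ?_) (measure_iUnion_null hcube)
  obtain ⟨m, I, hI⟩ := exists_cube_subset_limitSet hN (Set.nonempty_iff_ne_empty.2 hω)
  exact Set.mem_iUnion.2 ⟨⟨m, I⟩, hI⟩

/-- Theorem 5(i) of the paper: if some cube is contained in `D_fat` with positive
probability then `P(D_fat = [0,1]^d) > 0` (translation invariance and FKG); moreover
`P(D_fat = [0,1]^d) = ∏_{n≥1} p_n^{N^{dn}}`, so if `∏_{n≥1} p_n^{N^{dn}} = 0` then
`D_fat` has empty interior almost surely. -/
theorem stmt15 (N d : ℕ) (hN : 2 ≤ N) (hd : 1 ≤ d)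
    (p : ℕ → ℝ) (hp : ∀ m, 0 < p m ∧ p m ≤ 1) (hp0 : p 0 = 1)
    (μ : Measure (Config N d)) [IsProbabilityMeasure μ]
    (hmarg : ∀ (m : ℕ) (I : Fin m → Fin d → Fin N),
      μ {ω | ω m I = true} = ENNReal.ofReal (p m))
    (hindep : ProbabilityTheory.iIndepFun
      (fun (s : Σ m : ℕ, Fin m → Fin d → Fin N) (ω : Config N d) => ω s.1 s.2) μ) :
    ((∃ (m : ℕ) (I : Fin m → Fin d → Fin N),
        0 < μ {ω | cube N I ⊆ limitSet N d ω}) →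
      0 < μ {ω | limitSet N d ω = Set.Icc (0 : Fin d → ℝ) 1}) ∧
    (μ {ω | limitSet N d ω = Set.Icc (0 : Fin d → ℝ) 1} =
      ⨅ M : ℕ, ENNReal.ofReal (∏ m ∈ Finset.range M, p (m + 1) ^ (N ^ (d * (m + 1))))) ∧
    ((⨅ M : ℕ, ∏ m ∈ Finset.range M, p (m + 1) ^ (N ^ (d * (m + 1)))) = 0 →
      ∀ᵐ ω ∂μ, interior (limitSet N d ω) = ∅) :=
  stmt15_general N d hN p hp hp0 μ hmarg hindep
end

section
/- In fat fractal percolation on [0,1]^d, if ∏_{n=1}^∞ p_n^{N^n} > 0 then for every x ∈ [0,1]^{d-1} the probability that the full vertical segment {x}×[0,1] is contained in the limit set satisfies P({x}×[0,1] ⊆ D_fat) ≥ ∏_{n=1}^∞ p_n^{N^n} > 0, and consequently (by Fubini) E[λ_{d-1}({x : {x}×[0,1] ⊆ D_fat})] > 0, so with positive probability the union of connected components larger than a point has positive Lebesgue measure. -/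
open MeasureTheory

/-! Fix `x` with base-`N` digit sequences `a i` of its coordinates. The segment `{x} × [0,1]`
lies in `D_fat` as soon as every cube of the column over `x` is retained at every level: the
digits of any `t ∈ [0,1]` then single out a retained chain of cubes containing `(x, t)`. The
column has `N^m` cubes at level `m`, so by independence the probability that all of them up to
level `M` are retained is `∏_{m ≤ M} p_m^{N^m}`, and continuity from above gives the bound.
Integrating over `x` (Fubini) makes the expected measure of the set of such `x` positive, and
each such segment lies in a nontrivial connected component of `D_fat`. -/

open Set

lemma Real.sum_ofDigitsTerm_le_ofDigits {b : ℕ} (a : ℕ → Fin b) (n : ℕ) :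
    ∑ i ∈ Finset.range n, Real.ofDigitsTerm a i ≤ Real.ofDigits a := by
  rw [Real.ofDigits_eq_sum_add_ofDigits a n]
  exact le_add_of_nonneg_right (mul_nonneg (by positivity) (Real.ofDigits_nonneg _))

lemma Real.ofDigits_le_sum_ofDigitsTerm_add {b : ℕ} (a : ℕ → Fin b) (n : ℕ) :
    Real.ofDigits a ≤ ∑ i ∈ Finset.range n, Real.ofDigitsTerm a i + 1 / (b : ℝ) ^ n := by
  rw [Real.ofDigits_eq_sum_add_ofDigits a n, one_div]
  gcongr
  exact mul_le_of_le_one_right (by positivity) (Real.ofDigits_le_one _)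

lemma corner_eq_sum_ofDigitsTerm {N k m : ℕ} {I : Fin m → Fin k → Fin N} {i : Fin k}
    {a : ℕ → Fin N} (hI : ∀ j : Fin m, I j i = a j) :
    corner N I i = ∑ j ∈ Finset.range m, Real.ofDigitsTerm a j := by
  rw [corner, ← Fin.sum_univ_eq_sum_range]
  simp [hI, Real.ofDigitsTerm, div_eq_mul_inv]

lemma mem_cube_of_ofDigits {N k m : ℕ} {z : Fin k → ℝ} {I : Fin m → Fin k → Fin N}
    (h : ∀ i, ∃ a : ℕ → Fin N, Real.ofDigits a = z i ∧ ∀ j : Fin m, I j i = a j) :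
    z ∈ cube N I := by
  intro i
  obtain ⟨a, ha, hI⟩ := h i
  rw [corner_eq_sum_ofDigitsTerm hI, ← ha]
  exact ⟨Real.sum_ofDigitsTerm_le_ofDigits a m, Real.ofDigits_le_sum_ofDigitsTerm_add a m⟩

lemma ProbabilityTheory.iIndepFun.measure_forall_mem_eq_prod {ι Ω : Type*} [MeasurableSpace Ω]
    {μ : Measure Ω} {X : ι → Ω → Bool} (hX : ProbabilityTheory.iIndepFun X μ)
    (T : Finset ι) :
    μ {ω | ∀ i ∈ T, X i ω = true} = ∏ i ∈ T, μ {ω | X i ω = true} := by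
  convert hX.meas_biInter (S := T) (s := fun i => {ω | X i ω = true})
    fun i _ => ⟨{true}, measurableSet_singleton true, rfl⟩
  ext ω
  simp

lemma measurableSet_config_eq_true {N d m : ℕ} (I : Fin m → Fin d → Fin N) :
    MeasurableSet {ω : Config N d | ω m I = true} := by
  have : Measurable fun ω : Config N d => ω m I := by fun_prop
  exact this (measurableSet_singleton true)

section Column

variable {N d : ℕ}

/-- The level-`m` words of the column `{x} × [0,1]`, where `a i` is a base-`N` digit sequence
of `x i`; the vertical digits `v` are free. -/
def columnWord (a : Fin d → ℕ → Fin N) {m : ℕ} (v : Fin m → Fin N) :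
    Fin m → Fin (d + 1) → Fin N :=
  fun j => Fin.snoc (fun i => a i j) (v j)

lemma columnWord_injective (a : Fin d → ℕ → Fin N) (m : ℕ) :
    Function.Injective (columnWord a (m := m)) := fun v w h =>
  funext fun j => by simpa [columnWord] using congrFun (congrFun h j) (Fin.last d)

lemma snoc_mem_limitSet_of_columnWord (hN : 1 < N) {ω : Config N (d + 1)} {x : Fin d → ℝ}
    {a : Fin d → ℕ → Fin N} (ha : ∀ i, Real.ofDigits (a i) = x i)
    (hω : ∀ m (v : Fin m → Fin N), ω m (columnWord a v) = true) {t : ℝ} (ht : t ∈ Icc 0 1) :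
    Fin.snoc x t ∈ limitSet N (d + 1) ω := by
  obtain ⟨b, -, rfl⟩ := Real.ofDigits_SurjOn hN ht
  simp only [limitSet, mem_iInter, mem_iUnion, exists_prop]
  refine fun m => ⟨columnWord a fun j : Fin m => b j, fun l _ => hω l _, mem_cube_of_ofDigits ?_⟩
  refine Fin.lastCases ⟨b, by simp, fun j => by simp [columnWord]⟩ fun i => ⟨a i, ?_, fun j => ?_⟩
  · simp [ha]
  · simp [columnWord]

def columnIndices (a : Fin d → ℕ → Fin N) (M : ℕ) :
    Finset (Σ m : ℕ, Fin m → Fin (d + 1) → Fin N) :=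
  (Finset.range (M + 1)).sigma fun m => Finset.univ.map ⟨columnWord a, columnWord_injective a m⟩

lemma columnIndices_mono (a : Fin d → ℕ → Fin N) : Monotone (columnIndices a) :=
  fun _ _ h => Finset.sigma_mono (Finset.range_subset_range.2 (by omega)) fun _ => subset_rfl

lemma prod_columnIndices {p : ℕ → ℝ} (hp : ∀ m, 0 ≤ p m) (hp0 : p 0 = 1)
    (a : Fin d → ℕ → Fin N) (M : ℕ) :
    ∏ s ∈ columnIndices a M, ENNReal.ofReal (p s.1) =
      ENNReal.ofReal (∏ m ∈ Finset.range M, p (m + 1) ^ N ^ (m + 1)) := by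
  rw [columnIndices, Finset.prod_sigma, Finset.prod_range_succ']
  simp only [Finset.prod_const, Finset.card_map, Finset.card_univ, Fintype.card_fun,
    Fintype.card_fin, hp0, ENNReal.ofReal_one, one_pow, mul_one]
  rw [ENNReal.ofReal_prod_of_nonneg fun m _ => pow_nonneg (hp _) _]
  simp only [ENNReal.ofReal_pow (hp _)]

lemma ofReal_iInf_prod_le_measure_column {p : ℕ → ℝ} (hp : ∀ m, 0 ≤ p m) (hp0 : p 0 = 1)
    {μ : Measure (Config N (d + 1))} [IsProbabilityMeasure μ]
    (hmarg : ∀ (m : ℕ) (I : Fin m → Fin (d + 1) → Fin N),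
      μ {ω | ω m I = true} = ENNReal.ofReal (p m))
    (hindep : ProbabilityTheory.iIndepFun
      (fun (s : Σ m : ℕ, Fin m → Fin (d + 1) → Fin N) (ω : Config N (d + 1)) => ω s.1 s.2) μ)
    (a : Fin d → ℕ → Fin N) :
    ENNReal.ofReal (⨅ M : ℕ, ∏ m ∈ Finset.range M, p (m + 1) ^ N ^ (m + 1)) ≤
      μ {ω | ∀ m (v : Fin m → Fin N), ω m (columnWord a v) = true} := by
  set E : ℕ → Set (Config N (d + 1)) := fun M => {ω | ∀ s ∈ columnIndices a M, ω s.1 s.2 = true}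
  have hcolumn : {ω : Config N (d + 1) | ∀ m (v : Fin m → Fin N), ω m (columnWord a v) = true} =
      ⋂ M, E M := by
    ext ω
    simp only [E, columnIndices, mem_ofPred_eq, mem_iInter, Finset.mem_sigma, Finset.mem_range,
      Finset.mem_map, Finset.mem_univ, true_and, Function.Embedding.coeFn_mk]
    exact ⟨fun h M ⟨m, I⟩ ⟨_, v, hv⟩ => hv ▸ h m v,
      fun h m v => h m ⟨m, columnWord a v⟩ ⟨Nat.lt_succ_self m, v, rfl⟩⟩
  have hE : ∀ M, μ (E M) = ENNReal.ofReal (∏ m ∈ Finset.range M, p (m + 1) ^ N ^ (m + 1)) :=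
    fun M => by
      rw [hindep.measure_forall_mem_eq_prod, ← prod_columnIndices hp hp0 a M]
      exact Finset.prod_congr rfl fun s _ => hmarg s.1 s.2
  have hanti : Antitone E := fun M M' h ω hω s hs => hω s (columnIndices_mono a h hs)
  have hmeas : ∀ M, NullMeasurableSet (E M) μ := fun M => by
    simpa only [E, ofPred_forall] using
      ((columnIndices a M).measurableSet_biInter fun s _ =>
        measurableSet_config_eq_true s.2).nullMeasurableSet
  have hbdd : BddBelow (range fun M => ∏ m ∈ Finset.range M, p (m + 1) ^ N ^ (m + 1)) :=
    ⟨0, by rintro _ ⟨M, rfl⟩; exact Finset.prod_nonneg fun m _ => pow_nonneg (hp _) _⟩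
  rw [hcolumn, hanti.measure_iInter hmeas ⟨0, measure_ne_top μ _⟩]
  exact le_iInf fun M => (hE M).symm ▸ ENNReal.ofReal_le_ofReal (ciInf_le hbdd M)

end Column

theorem ofReal_iInf_prod_le_measure_segment_subset_limitSet {N d : ℕ} (hN : 1 < N)
    {p : ℕ → ℝ} (hp : ∀ m, 0 ≤ p m) (hp0 : p 0 = 1)
    {μ : Measure (Config N (d + 1))} [IsProbabilityMeasure μ]
    (hmarg : ∀ (m : ℕ) (I : Fin m → Fin (d + 1) → Fin N),
      μ {ω | ω m I = true} = ENNReal.ofReal (p m))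
    (hindep : ProbabilityTheory.iIndepFun
      (fun (s : Σ m : ℕ, Fin m → Fin (d + 1) → Fin N) (ω : Config N (d + 1)) => ω s.1 s.2) μ)
    {x : Fin d → ℝ} (hx : x ∈ Icc 0 1) :
    ENNReal.ofReal (⨅ M : ℕ, ∏ m ∈ Finset.range M, p (m + 1) ^ N ^ (m + 1)) ≤
      μ {ω | ∀ t ∈ Icc (0 : ℝ) 1, Fin.snoc x t ∈ limitSet N (d + 1) ω} := by
  choose a ha using fun i => Real.ofDigits_SurjOn hN ⟨hx.1 i, hx.2 i⟩
  refine (ofReal_iInf_prod_le_measure_column hp hp0 hmarg hindep a).trans (measure_mono ?_)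
  exact fun ω hω t ht => snoc_mem_limitSet_of_columnWord hN (fun i => (ha i).2) hω ht

lemma isClosed_cube (N : ℕ) {d m : ℕ} (I : Fin m → Fin d → Fin N) : IsClosed (cube N I) := by
  simp only [cube, ofPred_forall]
  exact isClosed_iInter fun i => (isClosed_le continuous_const (continuous_apply i)).inter
    (isClosed_le (continuous_apply i) continuous_const)

lemma DenseRange.forall_mem_iff {X Y ι : Type*} [TopologicalSpace X] [TopologicalSpace Y]
    {s : Set Y} {u : ι → s} (hu : DenseRange u) {f : Y → X} (hf : Continuous f) {F : Set X}
    (hF : IsClosed F) :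
    (∀ t ∈ s, f t ∈ F) ↔ ∀ i, f (u i) ∈ F :=
  ⟨fun h i => h _ (u i).2, fun h t ht =>
    hu.induction_on (p := fun t : s => f t ∈ F) ⟨t, ht⟩
      (hF.preimage (hf.comp continuous_subtype_val)) h⟩

lemma measurableSet_segment_subset_limitSet (N d : ℕ) :
    MeasurableSet {q : Config N (d + 1) × (Fin d → ℝ) | q.2 ∈ Icc 0 1 ∧
      ∀ t ∈ Icc (0 : ℝ) 1, Fin.snoc q.2 t ∈ limitSet N (d + 1) q.1} := by
  obtain ⟨u, hu⟩ := TopologicalSpace.exists_dense_seq (Icc (0 : ℝ) 1)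
  have hsnoc : ∀ x : Fin d → ℝ, Continuous fun t : ℝ => (Fin.snoc x t : Fin (d + 1) → ℝ) :=
    fun x => by fun_prop
  have hlevel : ∀ (ω : Config N (d + 1)) m,
      IsClosed (⋃ I ∈ {I : Fin m → Fin (d + 1) → Fin N | retained N (d + 1) ω I}, cube N I) :=
    fun ω m => (toFinite _).isClosed_biUnion fun I _ => isClosed_cube N I
  have hretained : ∀ {m} (I : Fin m → Fin (d + 1) → Fin N),
      MeasurableSet {ω : Config N (d + 1) | retained N (d + 1) ω I} := fun I => by
    simp only [retained, ofPred_forall]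
    exact .iInter fun l => .iInter fun h => measurableSet_config_eq_true _
  have hset : {q : Config N (d + 1) × (Fin d → ℝ) | q.2 ∈ Icc 0 1 ∧
      ∀ t ∈ Icc (0 : ℝ) 1, Fin.snoc q.2 t ∈ limitSet N (d + 1) q.1} =
      (univ ×ˢ Icc 0 1) ∩ ⋂ (m : ℕ) (n : ℕ), ⋃ I : Fin m → Fin (d + 1) → Fin N,
        {ω | retained N (d + 1) ω I} ×ˢ {x | Fin.snoc x (u n : ℝ) ∈ cube N I} := by
    ext ⟨ω, x⟩
    have hseg : (∀ t ∈ Icc (0 : ℝ) 1, Fin.snoc x t ∈ limitSet N (d + 1) ω) ↔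
        ∀ m n, Fin.snoc x (u n : ℝ) ∈
          ⋃ I ∈ {I : Fin m → Fin (d + 1) → Fin N | retained N (d + 1) ω I}, cube N I := by
      simp only [limitSet, mem_iInter]
      exact ⟨fun h m n => h _ (u n).2 m,
        fun h t ht m => (hu.forall_mem_iff (hsnoc x) (hlevel ω m)).2 (h m) t ht⟩
    simp only [mem_ofPred_eq, hseg, mem_inter_iff, mem_prod, mem_univ, true_and, mem_iInter,
      mem_iUnion, exists_prop]
  rw [hset]
  exact (MeasurableSet.univ.prod measurableSet_Icc).inter <| .iInter fun m => .iInter fun n =>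
    .iUnion fun I => (hretained I).prod
      ((isClosed_cube N I).preimage (by fun_prop)).measurableSet

lemma le_lintegral_volume_slice {Ω : Type*} [MeasurableSpace Ω] {μ : Measure Ω} [SFinite μ]
    {d : ℕ} {S : Set (Ω × (Fin d → ℝ))} (hS : MeasurableSet S) {c : ENNReal}
    (hc : ∀ x ∈ Icc (0 : Fin d → ℝ) 1, c ≤ μ {ω | (ω, x) ∈ S}) :
    c ≤ ∫⁻ ω, volume {x | (ω, x) ∈ S} ∂μ := by
  calc c = ∫⁻ _ in Icc (0 : Fin d → ℝ) 1, c := by simp [Real.volume_Icc_pi]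
    _ ≤ ∫⁻ x in Icc (0 : Fin d → ℝ) 1, μ {ω | (ω, x) ∈ S} :=
      setLIntegral_mono' measurableSet_Icc hc
    _ ≤ ∫⁻ x, μ {ω | (ω, x) ∈ S} := setLIntegral_le_lintegral _ _
    _ = ∫⁻ ω, volume {x | (ω, x) ∈ S} ∂μ :=
      (Measure.prod_apply_symm hS).symm.trans (Measure.prod_apply hS)

lemma connectedComponentIn_ne_singleton {X : Type*} [TopologicalSpace X] {F K : Set X} {z : X}
    (hK : IsPreconnected K) (hKF : K ⊆ F) (hz : z ∈ K) (hnt : K.Nontrivial) :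
    connectedComponentIn F z ≠ {z} := fun h =>
  hnt.not_subsingleton (subsingleton_singleton.anti (h ▸ hK.subset_connectedComponentIn hz hKF))

lemma volume_Icc_prod_preimage_init {d : ℕ} (A : Set (Fin d → ℝ)) :
    volume {z : Fin (d + 1) → ℝ | z (Fin.last d) ∈ Icc 0 1 ∧ Fin.init z ∈ A} = volume A := by
  have he := volume_preserving_piFinSuccAbove (fun _ : Fin (d + 1) => ℝ) (Fin.last d)
  have := he.measure_preimage_equiv (Icc 0 1 ×ˢ A)
  rw [Measure.volume_eq_prod, Measure.prod_prod, Real.volume_Icc, sub_zero, ENNReal.ofReal_one,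
    one_mul] at this
  convert this using 2
  ext z
  simp [MeasurableEquiv.piFinSuccAbove_apply]

lemma volume_base_segment_subset_le {d : ℕ} (D : Set (Fin (d + 1) → ℝ)) :
    volume {x : Fin d → ℝ | x ∈ Icc 0 1 ∧ ∀ t ∈ Icc (0 : ℝ) 1, Fin.snoc x t ∈ D} ≤
      volume {z | z ∈ D ∧ connectedComponentIn D z ≠ {z}} := by
  rw [← volume_Icc_prod_preimage_init]
  refine measure_mono fun z ⟨hzt, _, hseg⟩ => ?_
  set K := (fun t : ℝ => (Fin.snoc (Fin.init z) t : Fin (d + 1) → ℝ)) '' Icc 0 1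
  have hzK : z ∈ K := ⟨z (Fin.last d), hzt, Fin.snoc_init_self z⟩
  have hKD : K ⊆ D := image_subset_iff.2 hseg
  have hK : IsPreconnected K := isPreconnected_Icc.image _ (by fun_prop)
  have hnt : K.Nontrivial := ⟨_, ⟨0, by simp, rfl⟩, _, ⟨1, by simp, rfl⟩,
    fun h => zero_ne_one (α := ℝ) (by simpa using congrFun h (Fin.last d))⟩
  exact ⟨hKD hzK, connectedComponentIn_ne_singleton hK hKD hzK hnt⟩

lemma measure_pos_of_lintegral_pos {Ω : Type*} [MeasurableSpace Ω] {μ : Measure Ω}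
    {f : Ω → ENNReal} (hf : 0 < ∫⁻ ω, f ω ∂μ) : 0 < μ {ω | 0 < f ω} := by
  refine pos_iff_ne_zero.2 fun h => hf.ne' (lintegral_eq_zero_of_ae_eq_zero ?_)
  filter_upwards [measure_eq_zero_iff_ae_notMem.1 h] with ω hω
  simpa [pos_iff_ne_zero] using hω

theorem stmt16_general (N d : ℕ) (hN : 2 ≤ N)
    (p : ℕ → ℝ) (hp : ∀ m, 0 < p m ∧ p m ≤ 1) (hp0 : p 0 = 1)
    (μ : Measure (Config N (d + 1))) [IsProbabilityMeasure μ]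
    (hmarg : ∀ (m : ℕ) (I : Fin m → Fin (d + 1) → Fin N),
      μ {ω | ω m I = true} = ENNReal.ofReal (p m))
    (hindep : ProbabilityTheory.iIndepFun
      (fun (s : Σ m : ℕ, Fin m → Fin (d + 1) → Fin N) (ω : Config N (d + 1)) => ω s.1 s.2)
      μ)
    (hprod : 0 < ⨅ M : ℕ, ∏ m ∈ Finset.range M, p (m + 1) ^ (N ^ (m + 1))) :
    (∀ x : Fin d → ℝ, x ∈ Set.Icc (0 : Fin d → ℝ) 1 →
      ENNReal.ofReal (⨅ M : ℕ, ∏ m ∈ Finset.range M, p (m + 1) ^ (N ^ (m + 1))) ≤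
        μ {ω | ∀ t ∈ Set.Icc (0 : ℝ) 1, Fin.snoc x t ∈ limitSet N (d + 1) ω}) ∧
    (0 < ∫⁻ ω, volume {x : Fin d → ℝ | x ∈ Set.Icc (0 : Fin d → ℝ) 1 ∧
        ∀ t ∈ Set.Icc (0 : ℝ) 1, Fin.snoc x t ∈ limitSet N (d + 1) ω} ∂μ) ∧
    (0 < μ {ω | 0 < volume {z : Fin (d + 1) → ℝ | z ∈ limitSet N (d + 1) ω ∧
        connectedComponentIn (limitSet N (d + 1) ω) z ≠ {z}}}) := by
  have hsegment := fun x (hx : x ∈ Icc (0 : Fin d → ℝ) 1) =>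
    ofReal_iInf_prod_le_measure_segment_subset_limitSet hN (fun m => (hp m).1.le) hp0 hmarg
      hindep hx
  have hintegral := (ENNReal.ofReal_pos.2 hprod).trans_le <|
    le_lintegral_volume_slice (measurableSet_segment_subset_limitSet N d) fun x hx =>
      (hsegment x hx).trans (measure_mono fun ω hω => ⟨hx, hω⟩)
  refine ⟨hsegment, hintegral, ?_⟩
  exact (measure_pos_of_lintegral_pos hintegral).trans_le <| measure_mono fun ω hω =>
    hω.trans_le (volume_base_segment_subset_le _)

/-- Theorem 5(ii) of the paper, in dimension `d+1 ≥ 2`: if `∏_{n≥1} p_n^{N^n} > 0` then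
for every `x ∈ [0,1]^d` the vertical segment `{x} × [0,1]` is contained in `D_fat` with
probability at least `∏_{n≥1} p_n^{N^n} > 0`; consequently (by Fubini) the expected
`d`-dimensional Lebesgue measure of the set of such `x` is positive, and with positive
probability the union of connected components of `D_fat` larger than one point has
positive Lebesgue measure. -/
theorem stmt16 (N d : ℕ) (hN : 2 ≤ N) (hd : 1 ≤ d)
    (p : ℕ → ℝ) (hp : ∀ m, 0 < p m ∧ p m ≤ 1) (hp0 : p 0 = 1)
    (μ : Measure (Config N (d + 1))) [IsProbabilityMeasure μ]
    (hmarg : ∀ (m : ℕ) (I : Fin m → Fin (d + 1) → Fin N),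
      μ {ω | ω m I = true} = ENNReal.ofReal (p m))
    (hindep : ProbabilityTheory.iIndepFun
      (fun (s : Σ m : ℕ, Fin m → Fin (d + 1) → Fin N) (ω : Config N (d + 1)) => ω s.1 s.2)
      μ)
    (hprod : 0 < ⨅ M : ℕ, ∏ m ∈ Finset.range M, p (m + 1) ^ (N ^ (m + 1))) :
    (∀ x : Fin d → ℝ, x ∈ Set.Icc (0 : Fin d → ℝ) 1 →
      ENNReal.ofReal (⨅ M : ℕ, ∏ m ∈ Finset.range M, p (m + 1) ^ (N ^ (m + 1))) ≤
        μ {ω | ∀ t ∈ Set.Icc (0 : ℝ) 1, Fin.snoc x t ∈ limitSet N (d + 1) ω}) ∧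
    (0 < ∫⁻ ω, volume {x : Fin d → ℝ | x ∈ Set.Icc (0 : Fin d → ℝ) 1 ∧
        ∀ t ∈ Set.Icc (0 : ℝ) 1, Fin.snoc x t ∈ limitSet N (d + 1) ω} ∂μ) ∧
    (0 < μ {ω | 0 < volume {z : Fin (d + 1) → ℝ | z ∈ limitSet N (d + 1) ω ∧
        connectedComponentIn (limitSet N (d + 1) ω) z ≠ {z}}}) :=
  stmt16_general N d hN p hp hp0 μ hmarg hindep hprod
end
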